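/- arXiv:2507.16939 — 6 statements merged into one kernel-verified Lean document; each statement's English description precedes it below -/
import Mathlib

section
/- For all natural numbers n, p, q, the identity ∑_{k=0}^{n} C(n,k) · (2n−2k−1+q)!! · (2k−1+p)!! = ((p−1)!! · (q−1)!! / (p+q)!!) · (2n+p+q)!! holds, where !! denotes the double factorial with the convention (−1)!! = 0!! = 1. -/
/-!
If `f` and `g` satisfy first-order recurrences whose coefficients grow by the same step `d`,
`f (j + 1) = (a + d j) f j` and `g (j + 1) = (b + d j) g j`, then Pascal's rule shows that the
binomial convolution `Sₙ = ∑ₖ C(n,k) f(n-k) g(k)` satisfies `Sₙ₊₁ = (a + b + d n) Sₙ`, because the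
coefficients picked up from the two halves of Pascal's rule add to a quantity independent of `k`.
Both `j ↦ (2j + q - 1)‼` and `j ↦ (2j + p - 1)‼` are of this form with `d = 2`, and the resulting
product `∏_{m<n} (p + q + 2 + 2m)` extends `(p + q)‼` to `(2n + p + q)‼`.
-/

open Finset
open scoped Nat

section BinomialConvolution

variable {R : Type*} [CommSemiring R] {f g : ℕ → R} {a b d : R}

theorem sum_choose_mul_succ_of_linear_recurrence (hf : ∀ j, f (j + 1) = (a + d * j) * f j)
    (hg : ∀ j, g (j + 1) = (b + d * j) * g j) (n : ℕ) :
    ∑ k ∈ range (n + 2), ((n + 1).choose k : R) * f (n + 1 - k) * g k =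
      (a + b + d * n) * ∑ k ∈ range (n + 1), (n.choose k : R) * f (n - k) * g k := by
  simp_rw [mul_assoc]
  rw [sum_choose_succ_mul (fun i j => f j * g i) n, mul_sum, ← sum_add_distrib]
  refine sum_congr rfl fun k hk => ?_
  have hkn : k ≤ n := Nat.lt_succ_iff.mp (mem_range.mp hk)
  rw [Nat.sub_add_comm hkn, hf, hg]
  have hsplit : (n : R) = (n - k : ℕ) + k := by rw [← Nat.cast_add, Nat.sub_add_cancel hkn]
  rw [hsplit]
  ring

theorem sum_choose_mul_of_linear_recurrence (hf : ∀ j, f (j + 1) = (a + d * j) * f j)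
    (hg : ∀ j, g (j + 1) = (b + d * j) * g j) (n : ℕ) :
    ∑ k ∈ range (n + 1), (n.choose k : R) * f (n - k) * g k =
      (∏ m ∈ range n, (a + b + d * m)) * (f 0 * g 0) := by
  induction n with
  | zero => simp
  | succ n ih =>
    rw [sum_choose_mul_succ_of_linear_recurrence hf hg, ih, prod_range_succ]
    ring

end BinomialConvolution

theorem Nat.doubleFactorial_mul_prod_range (m n : ℕ) :
    m‼ * ∏ i ∈ range n, (m + 2 + 2 * i) = (m + 2 * n)‼ := by
  induction n with
  | zero => simp
  | succ n ih =>
    rw [prod_range_succ, ← mul_assoc, ih, mul_comm, show m + 2 * (n + 1) = m + 2 * n + 2 by ring,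
      Nat.doubleFactorial_add_two]
    ring_nf

theorem Nat.doubleFactorial_two_mul_add_succ (r j : ℕ) :
    (2 * (j + 1) + r - 1)‼ = (r + 1 + 2 * j) * (2 * j + r - 1)‼ := by
  rw [show 2 * (j + 1) + r - 1 = 2 * j + r + 1 by omega, Nat.doubleFactorial_add_one]
  ring_nf

-- `(2 * k + p - 1)` truncates at `0`, which realizes the convention `(-1)‼ = 0‼ = 1`.
/-- For all natural numbers `n p q`,
`(p+q)‼ * ∑_{k=0}^{n} C(n,k) (2n−2k−1+q)‼ (2k−1+p)‼ = (p−1)‼ (q−1)‼ (2n+p+q)‼`,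
with the double factorial convention `(−1)‼ = 0‼ = 1` (realized here by writing the
arguments with truncated subtraction so that e.g. `2(n−k)+q−1 = 2n−2k−1+q`). -/
theorem doubleFactorial_binomial_sum (n p q : ℕ) :
    (p + q)‼ * ∑ k ∈ Finset.range (n + 1),
        n.choose k * (2 * (n - k) + q - 1)‼ * (2 * k + p - 1)‼ =
      (p - 1)‼ * (q - 1)‼ * (2 * n + p + q)‼ := by
  have hsum := sum_choose_mul_of_linear_recurrence (R := ℕ)
    (f := fun j => (2 * j + q - 1)‼) (g := fun j => (2 * j + p - 1)‼)
    (Nat.doubleFactorial_two_mul_add_succ q) (Nat.doubleFactorial_two_mul_add_succ p) n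
  simp only [Nat.cast_id, mul_zero, zero_add] at hsum
  rw [hsum, show 2 * n + p + q = p + q + 2 * n by ring,
    ← Nat.doubleFactorial_mul_prod_range (p + q) n]
  simp_rw [show ∀ m : ℕ, q + 1 + (p + 1) + 2 * m = p + q + 2 + 2 * m by intro m; ring]
  ring
end

section
/- For natural numbers d ≥ 2, k₀, p, q, the nested sum ∑_{0 ≤ k_{d-1} ≤ … ≤ k₁ ≤ k₀} [∏_{j=0}^{d-2} C(k_j, k_{j+1}) · (2k_j − 2k_{j+1} + q − 1)!!] · (2k_{d-1} + p − 1)!! equals (2k₀ + p + (d−1)(q+1) − 1)!! · (p−1)!! · ((q−1)!!)^{d−1} / (p + (d−1)(q+1) − 1)!!, where in the product one sets k_0 := k₀ as the top index (i.e. k₁ ranges from 0 to k₀). -/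
/-! Cutting off the top link `k₀ ≥ k₁` of a chain gives a recursion in the chain length `d`, and each
step of it is the binomial convolution
`(p + q)‼ ∑_{i + j = k} C(k, i) (2i + p − 1)‼ (2j + q − 1)‼ = (2k + p + q)‼ (p − 1)‼ (q − 1)‼`,
applied with `p` replaced by `p + (d − 2)(q + 1)`. This is the Chu–Vandermonde identity for the
step-two rising factorials `(2i + p − 1)‼ / (p − 1)‼ = ∏_{l < i} (p + 1 + 2l)`: by Pascal's rule the
convolution of two such sequences is multiplied by `2k + p + q + 2` when `k` grows by one. -/

open scoped Nat
open scoped Classical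

open Finset Matrix

theorem sum_antidiagonal_choose_mul_succ {R : Type*} [CommSemiring R] {a b : ℕ → R} {x y c : R}
    (ha : ∀ i, a (i + 1) = (x + i * c) * a i) (hb : ∀ j, b (j + 1) = (y + j * c) * b j)
    (k : ℕ) :
    ∑ ij ∈ antidiagonal (k + 1), ((k + 1).choose ij.1 : R) * (a ij.1 * b ij.2) =
      (x + y + k * c) * ∑ ij ∈ antidiagonal k, (k.choose ij.1 : R) * (a ij.1 * b ij.2) := by
  rw [sum_antidiagonal_choose_succ_mul (fun i j => a i * b j), mul_sum, ← sum_add_distrib]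
  refine sum_congr rfl fun ⟨i, j⟩ hij => ?_
  rw [HasAntidiagonal.mem_antidiagonal] at hij
  rw [Nat.choose_symm_of_eq_add hij.symm, ha, hb, ← hij]
  push_cast
  ring

theorem doubleFactorial_add_mul_sum_antidiagonal (p q k : ℕ) :
    (p + q)‼ * ∑ ij ∈ antidiagonal k, k.choose ij.1 * ((2 * ij.1 + p - 1)‼ * (2 * ij.2 + q - 1)‼) =
      (2 * k + p + q)‼ * ((p - 1)‼ * (q - 1)‼) := by
  have step (r i : ℕ) : (2 * (i + 1) + r - 1)‼ = (r + 1 + i * 2) * (2 * i + r - 1)‼ := by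
    rw [show 2 * (i + 1) + r - 1 = 2 * i + r + 1 by omega, Nat.doubleFactorial_add_one]
    ring_nf
  induction k with
  | zero => simp
  | succ k ih =>
    have hrec := sum_antidiagonal_choose_mul_succ (a := fun i => (2 * i + p - 1)‼)
      (b := fun j => (2 * j + q - 1)‼) (step p) (step q) k
    simp only [Nat.cast_id] at hrec
    rw [hrec, mul_left_comm, ih,
      show 2 * (k + 1) + p + q = 2 * k + p + q + 2 by ring, Nat.doubleFactorial_add_two]
    ring

def chainSet (n k : ℕ) : Finset (Fin (n + 1) → Fin (k + 1)) :=
  Finset.univ.filter (fun c => (c 0 : ℕ) = k ∧ ∀ i j : Fin (n + 1), i ≤ j → (c j : ℕ) ≤ (c i : ℕ))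

theorem mem_chainSet {n k : ℕ} {c : Fin (n + 1) → Fin (k + 1)} :
    c ∈ chainSet n k ↔ c 0 = Fin.last k ∧ Antitone c := by
  simp only [chainSet, mem_filter, mem_univ, true_and, Fin.ext_iff, Fin.val_last]
  rfl

theorem sum_chainSet_succ {M : Type*} [AddCommMonoid M] (n k : ℕ)
    (F : (Fin (n + 2) → Fin (k + 1)) → M) :
    ∑ c ∈ chainSet (n + 1) k, F c =
      ∑ m : Fin (k + 1), ∑ c ∈ chainSet n m,
        F (vecCons (Fin.last k) (Fin.castLE (Nat.succ_le_succ m.is_le) ∘ c)) := by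
  rw [← sum_fiberwise (chainSet (n + 1) k) (fun c => c 1)]
  refine sum_congr rfl fun m _ => (sum_bij (fun c _ => vecCons (Fin.last k)
    (Fin.castLE (Nat.succ_le_succ m.is_le) ∘ c)) ?_ ?_ ?_ fun _ _ => rfl).symm
  · intro c hc
    rw [mem_chainSet] at hc
    refine mem_filter.2 ⟨mem_chainSet.2 ⟨rfl, ?_⟩, ?_⟩
    · exact Antitone.vecCons (fun _ _ hij => hc.2 hij) (Fin.le_last _)
    · simp [hc.1, Fin.ext_iff]
  · intro c _ c' _ h
    funext i
    simpa using congrFun h i.succ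
  · intro c hc
    rw [mem_filter, mem_chainSet] at hc
    obtain ⟨⟨h0, hanti⟩, h1⟩ := hc
    have hle (i : Fin (n + 1)) : (c i.succ : ℕ) < m + 1 :=
      Nat.lt_succ_of_le (h1 ▸ hanti (Fin.succ_le_succ_iff.2 (Fin.zero_le i)))
    refine ⟨fun i => ⟨c i.succ, hle i⟩, ?_, ?_⟩
    · refine mem_chainSet.2 ⟨Fin.ext (by simp [← h1]), fun i j hij => ?_⟩
      exact hanti (Fin.succ_le_succ_iff.2 hij)
    · funext i
      cases i using Fin.cases <;> simp [h0]

def chainWeight (p q : ℕ) {n : ℕ} (c : Fin (n + 1) → ℕ) : ℕ :=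
  (∏ j : Fin n, (c j.castSucc).choose (c j.succ) * (2 * (c j.castSucc - c j.succ) + q - 1)‼) *
    (2 * c (Fin.last n) + p - 1)‼

theorem chainWeight_vecCons (p q : ℕ) {n : ℕ} (a : ℕ) (c : Fin (n + 1) → ℕ) :
    chainWeight p q (vecCons a c) =
      a.choose (c 0) * (2 * (a - c 0) + q - 1)‼ * chainWeight p q c := by
  simp only [chainWeight, Fin.prod_univ_succ, ← Fin.succ_last, ← Fin.succ_castSucc, cons_val_succ,
    Fin.castSucc_zero, cons_val_zero]
  ring

def chainSum (p q n k : ℕ) : ℕ :=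
  ∑ c ∈ chainSet n k, chainWeight p q (fun i => (c i : ℕ))

theorem chainSum_succ (p q n k : ℕ) :
    chainSum p q (n + 1) k =
      ∑ ij ∈ antidiagonal k, k.choose ij.1 * (2 * ij.2 + q - 1)‼ * chainSum p q n ij.1 := by
  rw [Nat.sum_antidiagonal_eq_sum_range_succ (fun i j => k.choose i * (2 * j + q - 1)‼ *
    chainSum p q n i), ← Fin.sum_univ_eq_sum_range, chainSum, sum_chainSet_succ]
  refine sum_congr rfl fun m _ => ?_
  rw [chainSum, mul_sum]
  refine sum_congr rfl fun c hc => ?_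
  have hval : (fun i => ((vecCons (Fin.last k) (Fin.castLE (Nat.succ_le_succ m.is_le) ∘ c) i :
      Fin (k + 1)) : ℕ)) = vecCons k (fun i => (c i : ℕ)) := by
    funext i
    cases i using Fin.cases <;> simp
  rw [hval, chainWeight_vecCons, (mem_chainSet.1 hc).1, Fin.val_last]

theorem doubleFactorial_mul_chainSum (p q n k : ℕ) :
    (p + n * (q + 1) - 1)‼ * chainSum p q n k =
      (2 * k + p + n * (q + 1) - 1)‼ * ((p - 1)‼ * (q - 1)‼ ^ n) := by
  induction n generalizing k with
  | zero =>
    have hchain : chainSet 0 k = {fun _ => Fin.last k} := by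
      ext c
      simp [mem_chainSet, funext_iff, Fin.forall_fin_one, Subsingleton.antitone]
    simp [chainSum, hchain, chainWeight, mul_comm]
  | succ n ih =>
    set P := p + n * (q + 1)
    have hP : p + (n + 1) * (q + 1) - 1 = P + q := by simp only [P]; ring_nf; omega
    have hk : 2 * k + p + (n + 1) * (q + 1) - 1 = 2 * k + P + q := by simp only [P]; ring_nf; omega
    refine Nat.eq_of_mul_eq_mul_left (Nat.doubleFactorial_pos (P - 1)) ?_
    calc (P - 1)‼ * ((p + (n + 1) * (q + 1) - 1)‼ * chainSum p q (n + 1) k)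
        = (P + q)‼ * ∑ ij ∈ antidiagonal k,
            k.choose ij.1 * (2 * ij.2 + q - 1)‼ * ((P - 1)‼ * chainSum p q n ij.1) := by
          rw [hP, chainSum_succ, mul_sum, mul_sum, mul_sum]
          refine sum_congr rfl fun _ _ => by ring
      _ = (p - 1)‼ * (q - 1)‼ ^ n * ((P + q)‼ * ∑ ij ∈ antidiagonal k,
            k.choose ij.1 * ((2 * ij.1 + P - 1)‼ * (2 * ij.2 + q - 1)‼)) := by
          simp only [ih, mul_sum]
          refine sum_congr rfl fun _ _ => by rw [show 2 * _ + p + n * (q + 1) = 2 * _ + P by ring]; ring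
      _ = (P - 1)‼ * ((2 * k + p + (n + 1) * (q + 1) - 1)‼ * ((p - 1)‼ * (q - 1)‼ ^ (n + 1))) := by
          rw [doubleFactorial_add_mul_sum_antidiagonal, hk]
          ring

theorem nested_doubleFactorial_sum_general (d k₀ p q : ℕ) :
    (p + (d - 1) * (q + 1) - 1)‼ *
        ∑ c ∈ Finset.univ.filter (fun c : Fin (d - 1 + 1) → Fin (k₀ + 1) =>
            (c 0 : ℕ) = k₀ ∧ ∀ i j : Fin (d - 1 + 1), i ≤ j → (c j : ℕ) ≤ (c i : ℕ)),
          (∏ j : Fin (d - 1),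
              (c j.castSucc : ℕ).choose (c j.succ) *
                (2 * ((c j.castSucc : ℕ) - (c j.succ : ℕ)) + q - 1)‼) *
            (2 * (c (Fin.last (d - 1)) : ℕ) + p - 1)‼ =
      (2 * k₀ + p + (d - 1) * (q + 1) - 1)‼ * (p - 1)‼ * ((q - 1)‼) ^ (d - 1) := by
  rw [mul_assoc _ (p - 1)‼]
  exact doubleFactorial_mul_chainSum p q (d - 1) k₀

/-- For `d ≥ 2`, `k₀`, `p`, `q`, the nested sum over weakly decreasing chains
`k₀ = k_0 ≥ k_1 ≥ … ≥ k_{d−1} ≥ 0` of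
`[∏_{j=0}^{d−2} C(k_j, k_{j+1}) (2k_j − 2k_{j+1} + q − 1)‼] (2k_{d−1} + p − 1)‼`,
multiplied by `(p + (d−1)(q+1) − 1)‼`, equals
`(2k₀ + p + (d−1)(q+1) − 1)‼ (p−1)‼ ((q−1)‼)^{d−1}`.
A chain is encoded as an antitone function `c : Fin (d−1+1) → Fin (k₀+1)` with `c 0 = k₀`. -/
theorem nested_doubleFactorial_sum (d k₀ p q : ℕ) (hd : 2 ≤ d) :
    (p + (d - 1) * (q + 1) - 1)‼ *
        ∑ c ∈ Finset.univ.filter (fun c : Fin (d - 1 + 1) → Fin (k₀ + 1) =>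
            (c 0 : ℕ) = k₀ ∧ ∀ i j : Fin (d - 1 + 1), i ≤ j → (c j : ℕ) ≤ (c i : ℕ)),
          (∏ j : Fin (d - 1),
              (c j.castSucc : ℕ).choose (c j.succ) *
                (2 * ((c j.castSucc : ℕ) - (c j.succ : ℕ)) + q - 1)‼) *
            (2 * (c (Fin.last (d - 1)) : ℕ) + p - 1)‼ =
      (2 * k₀ + p + (d - 1) * (q + 1) - 1)‼ * (p - 1)‼ * ((q - 1)‼) ^ (d - 1) :=
  nested_doubleFactorial_sum_general d k₀ p q
end

section
/- For every natural number t ≥ 1 and every k₀ with 0 ≤ k₀ ≤ ⌊t/2⌋, the alternating sum ∑_{i=0}^{⌊t/2⌋ − k₀} (−1)^i · C(t − 2k₀, 2i) · (2i − 1)!! · (2t − 2k₀ − 2i − 1)!! equals t! / (2k₀)!!. -/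
/-!
Let `E` be the linear functional on `ℤ[X]` sending `X ^ m` to the `m`-th moment of the standard
Gaussian, `(m - 1)‼` for even `m` and `0` for odd `m`. The moment recursion is Stein's identity
`E (X * p) = E p'`, and together with `He (n + 1) = X * He n - He n'` it gives
`E (He n * p) = E (p⁽ⁿ⁾)` for the probabilists' Hermite polynomials `He n`.
Writing `t = n + 2 k₀`, the alternating sum is `E (He n * X ^ t)`, read off from the explicit
coefficients of `He n`, while `E ((X ^ t)⁽ⁿ⁾) = t! / (2 k₀)! * (2 k₀ - 1)‼ = t! / (2 k₀)‼`.
-/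

open scoped Nat
open Polynomial Finset

def gaussianMoment : ℕ → ℤ
  | 0 => 1
  | 1 => 0
  | m + 2 => (m + 1) * gaussianMoment m

lemma gaussianMoment_succ (m : ℕ) : gaussianMoment (m + 1) = m * gaussianMoment (m - 1) := by
  cases m with
  | zero => simp [gaussianMoment]
  | succ m => rfl

lemma gaussianMoment_two_mul (j : ℕ) : gaussianMoment (2 * j) = (2 * j - 1)‼ := by
  induction j with
  | zero => rfl
  | succ j ih =>
    rw [Nat.mul_succ, gaussianMoment, ih, show 2 * j + 2 - 1 = 2 * j + 1 by omega,
      Nat.doubleFactorial_add_one]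
    push_cast
    ring

noncomputable def gaussianExpectation : ℤ[X] →ₗ[ℤ] ℤ :=
  lsum fun m => LinearMap.mulRight ℤ (gaussianMoment m)

lemma gaussianExpectation_monomial (m : ℕ) (a : ℤ) :
    gaussianExpectation (monomial m a) = a * gaussianMoment m := by
  simp [gaussianExpectation]

lemma gaussianExpectation_X_pow (m : ℕ) : gaussianExpectation (X ^ m) = gaussianMoment m := by
  simp [← monomial_one_right_eq_X_pow, gaussianExpectation_monomial]

lemma gaussianExpectation_mul_X_pow (p : ℤ[X]) (m : ℕ) :
    gaussianExpectation (p * X ^ m) =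
      ∑ k ∈ range (p.natDegree + 1), p.coeff k * gaussianMoment (k + m) := by
  conv_lhs => rw [p.as_sum_range_C_mul_X_pow]
  simp only [sum_mul, map_sum, C_mul_X_pow_eq_monomial, monomial_mul_X_pow,
    gaussianExpectation_monomial]

lemma gaussianExpectation_X_mul (p : ℤ[X]) :
    gaussianExpectation (X * p) = gaussianExpectation (derivative p) := by
  induction p using Polynomial.induction_on' with
  | add p q hp hq => rw [mul_add, derivative_add, map_add, map_add, hp, hq]
  | monomial m a =>
    rw [X_mul_monomial, derivative_monomial, gaussianExpectation_monomial,
      gaussianExpectation_monomial, gaussianMoment_succ]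
    ring

lemma gaussianExpectation_hermite_mul (n : ℕ) (p : ℤ[X]) :
    gaussianExpectation (hermite n * p) = gaussianExpectation (derivative^[n] p) := by
  induction n generalizing p with
  | zero => simp
  | succ n ih =>
    have h : hermite (n + 1) * p = X * (hermite n * p) - derivative (hermite n) * p := by
      rw [hermite_succ]; ring
    rw [h, map_sub, gaussianExpectation_X_mul, derivative_mul, map_add, add_sub_cancel_left, ih,
      Function.iterate_succ_apply]

/-- Only the coefficients of `X ^ (n - 2 * i)` of `hermite n` are nonzero. -/
lemma gaussianExpectation_hermite_mul_X_pow_eq_sum (n m : ℕ) :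
    gaussianExpectation (hermite n * X ^ m) =
      ∑ i ∈ range (n / 2 + 1),
        (-1) ^ i * (n.choose (2 * i) : ℤ) * ((2 * i - 1)‼ : ℤ) *
          gaussianMoment (n - 2 * i + m) := by
  rw [gaussianExpectation_mul_X_pow, natDegree_hermite]
  symm
  refine sum_of_injOn (fun i ↦ n - 2 * i) ?_ ?_ ?_ ?_
  · intro i hi i' hi' h
    simp only [coe_range, Set.mem_Iio] at hi hi' h
    omega
  · intro i hi
    simp only [coe_range, Set.mem_Iio] at hi ⊢
    omega
  · intro k hk hk'
    rw [coeff_hermite_of_odd_add, zero_mul]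
    simp only [mem_range, coe_range, Set.mem_image, Set.mem_Iio, not_exists, not_and] at hk hk'
    rw [Nat.odd_iff]
    by_contra h
    exact hk' ((n - k) / 2) (by omega) (by omega)
  · intro i hi
    simp only [mem_range] at hi
    rw [coeff_hermite_of_even_add (by rw [Nat.even_iff]; omega),
      show n - (n - 2 * i) = 2 * i by omega, Nat.mul_div_cancel_left i two_pos,
      Nat.choose_symm (by omega)]
    ring

lemma gaussianExpectation_hermite_mul_X_pow_add_two_mul (n j : ℕ) :
    gaussianExpectation (hermite n * X ^ (n + 2 * j)) =
      (n + 2 * j).descFactorial n * (2 * j - 1)‼ := by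
  rw [gaussianExpectation_hermite_mul, iterate_derivative_X_pow_eq_smul, map_smul,
    gaussianExpectation_X_pow, Nat.add_sub_cancel_left, gaussianMoment_two_mul, smul_eq_mul]

lemma Nat.doubleFactorial_mul_doubleFactorial_sub_one (m : ℕ) : m‼ * (m - 1)‼ = m ! := by
  cases m with
  | zero => rfl
  | succ m => rw [Nat.add_sub_cancel, Nat.factorial_eq_mul_doubleFactorial]

theorem alternating_doubleFactorial_sum_general (t k₀ : ℕ) (hk : k₀ ≤ t / 2) :
    ((2 * k₀)‼ : ℤ) * ∑ i ∈ Finset.range (t / 2 - k₀ + 1),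
        (-1 : ℤ) ^ i * ((t - 2 * k₀).choose (2 * i) : ℤ) *
          ((2 * i - 1)‼ : ℤ) * ((2 * t - 2 * k₀ - 2 * i - 1)‼ : ℤ) =
      (t ! : ℤ) := by
  obtain ⟨n, rfl⟩ : ∃ n, t = n + 2 * k₀ := ⟨t - 2 * k₀, by omega⟩
  have hterm : ∀ i ∈ range (n / 2 + 1),
      (-1 : ℤ) ^ i * ((n + 2 * k₀ - 2 * k₀).choose (2 * i) : ℤ) * ((2 * i - 1)‼ : ℤ) *
          ((2 * (n + 2 * k₀) - 2 * k₀ - 2 * i - 1)‼ : ℤ) =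
        (-1) ^ i * (n.choose (2 * i) : ℤ) * ((2 * i - 1)‼ : ℤ) *
          gaussianMoment (n - 2 * i + (n + 2 * k₀)) := by
    intro i hi
    rw [mem_range] at hi
    rw [Nat.add_sub_cancel, show n - 2 * i + (n + 2 * k₀) = 2 * (n + k₀ - i) by omega,
      gaussianMoment_two_mul,
      show 2 * (n + k₀ - i) - 1 = 2 * (n + 2 * k₀) - 2 * k₀ - 2 * i - 1 by omega]
  have hfac := Nat.factorial_mul_descFactorial (n := n + 2 * k₀) (k := n) (by omega)
  rw [Nat.add_sub_cancel_left, ← Nat.doubleFactorial_mul_doubleFactorial_sub_one] at hfac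
  rw [show (n + 2 * k₀) / 2 - k₀ + 1 = n / 2 + 1 by omega, sum_congr rfl hterm,
    ← gaussianExpectation_hermite_mul_X_pow_eq_sum,
    gaussianExpectation_hermite_mul_X_pow_add_two_mul, ← hfac]
  push_cast
  ring

/-- For `t ≥ 1` and `0 ≤ k₀ ≤ ⌊t/2⌋`,
`(2k₀)‼ ∑_{i=0}^{⌊t/2⌋−k₀} (−1)^i C(t−2k₀, 2i) (2i−1)‼ (2t−2k₀−2i−1)‼ = t!`,
with the double factorial convention `(−1)‼ = 0‼ = 1` (realized by truncated
subtraction in ℕ). -/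
theorem alternating_doubleFactorial_sum (t k₀ : ℕ) (ht : 1 ≤ t) (hk : k₀ ≤ t / 2) :
    ((2 * k₀)‼ : ℤ) * ∑ i ∈ Finset.range (t / 2 - k₀ + 1),
        (-1 : ℤ) ^ i * ((t - 2 * k₀).choose (2 * i) : ℤ) *
          ((2 * i - 1)‼ : ℤ) * ((2 * t - 2 * k₀ - 2 * i - 1)‼ : ℤ) =
      (t ! : ℤ) :=
  alternating_doubleFactorial_sum_general t k₀ hk
end

section
/- For natural numbers d ≥ 2 and t ≥ 1, the eigenvalues λ_k = t!(d−2)!!/((2k)!!(d+2t−2k−2)!!) for 0 ≤ k ≤ ⌊t/2⌋ are strictly increasing in k, and the weighted sum with multiplicities α_k = C(d+t−2k−1, d−1) − C(d+t−2k−3, d−1) satisfies ∑_{k=0}^{⌊t/2⌋} α_k λ_k = 1 (i.e., the trace of the averaged real Haar density matrix is 1). -/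
open scoped Nat

noncomputable def evL (d t k : ℕ) : ℝ :=
  ((t ! * (d - 2)‼ : ℕ) : ℝ) / (((2 * k)‼ * (d + 2 * t - 2 * k - 2)‼ : ℕ) : ℝ)

noncomputable def evH (d n : ℕ) : ℝ :=
  if d = 0 then (if n = 0 then 1 else if n = 2 then -1 else 0)
  else if d = 1 then (if n ≤ 1 then 1 else 0)
  else ((n + d - 1).choose (d - 1) : ℝ) - ((n + d - 3).choose (d - 1) : ℝ)

noncomputable def evS (d t : ℕ) : ℝ :=
  ∑ k ∈ Finset.range (t / 2 + 1), evH d (t - 2 * k) * evL d t k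

lemma dfac_step {a : ℕ} (ha : 1 ≤ a) : a‼ = a * (a - 2)‼ := by
  obtain ⟨b, rfl⟩ := Nat.exists_eq_add_of_le ha
  rw [add_comm]
  simpa using Nat.doubleFactorial_add_one b

lemma evL_den_pos (d t k : ℕ) : (0:ℝ) < (((2 * k)‼ * (d + 2 * t - 2 * k - 2)‼ : ℕ) : ℝ) := by
  positivity

lemma evL_num_pos (d t : ℕ) : (0:ℝ) < ((t ! * (d - 2)‼ : ℕ) : ℝ) := by
  positivity

lemma cast_div_eq {a n1 e1 b n2 e2 : ℕ} (h1 : 0 < e1) (h2 : 0 < e2)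
    (h : a * n1 * e2 = b * n2 * e1) :
    (a : ℝ) * ((n1 : ℝ) / (e1 : ℝ)) = (b : ℝ) * ((n2 : ℝ) / (e2 : ℝ)) := by
  rw [mul_div_assoc', mul_div_assoc',
    div_eq_div_iff (by exact_mod_cast h1.ne' : (e1:ℝ) ≠ 0) (by exact_mod_cast h2.ne' : (e2:ℝ) ≠ 0)]
  exact_mod_cast h

lemma evL_R1 {d t k : ℕ} (hd : 1 ≤ d) (ht : 1 ≤ t) (hk : 2 * k ≤ t) :
    ((d + 2 * t - 2 * k - 2 : ℕ) : ℝ) * evL d t k = (t : ℝ) * evL d (t - 1) k := by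
  have ha : 1 ≤ d + 2 * t - 2 * k - 2 := by omega
  unfold evL
  apply cast_div_eq (Nat.mul_pos (Nat.doubleFactorial_pos _) (Nat.doubleFactorial_pos _))
    (Nat.mul_pos (Nat.doubleFactorial_pos _) (Nat.doubleFactorial_pos _))
  have e2 : d + 2 * (t - 1) - 2 * k - 2 = d + 2 * t - 2 * k - 2 - 2 := by omega
  have e3 : t ! = t * (t - 1)! := by
    conv_lhs => rw [show t = t - 1 + 1 by omega]
    rw [Nat.factorial_succ]; congr 1; omega
  rw [e2, e3, dfac_step ha]
  ring

lemma evL_R2 {d t k : ℕ} (ht : 1 ≤ t) (hk1 : 1 ≤ k) :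
    ((2 * k : ℕ) : ℝ) * evL d t k = (t : ℝ) * evL d (t - 1) (k - 1) := by
  unfold evL
  apply cast_div_eq (Nat.mul_pos (Nat.doubleFactorial_pos _) (Nat.doubleFactorial_pos _))
    (Nat.mul_pos (Nat.doubleFactorial_pos _) (Nat.doubleFactorial_pos _))
  have e1 : 2 * (k - 1) = 2 * k - 2 := by omega
  have e2 : d + 2 * (t - 1) - 2 * (k - 1) - 2 = d + 2 * t - 2 * k - 2 := by omega
  have e3 : t ! = t * (t - 1)! := by
    conv_lhs => rw [show t = t - 1 + 1 by omega]
    rw [Nat.factorial_succ]; congr 1; omega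
  rw [e2, e1, e3, dfac_step (show 1 ≤ 2 * k by omega)]
  ring

lemma evL_R3 {d t k : ℕ} (hd : 3 ≤ d) (ht : 1 ≤ t) :
    (t : ℝ) * evL d (t - 1) k = ((d - 2 : ℕ) : ℝ) * evL (d - 2) t k := by
  unfold evL
  apply cast_div_eq (Nat.mul_pos (Nat.doubleFactorial_pos _) (Nat.doubleFactorial_pos _))
    (Nat.mul_pos (Nat.doubleFactorial_pos _) (Nat.doubleFactorial_pos _))
  have e1 : d - 2 - 2 = d - 4 := by omega
  have e2 : d - 2 + 2 * t - 2 * k - 2 = d + 2 * (t - 1) - 2 * k - 2 := by omega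
  have e3 : t ! = t * (t - 1)! := by
    conv_lhs => rw [show t = t - 1 + 1 by omega]
    rw [Nat.factorial_succ]; congr 1; omega
  rw [e2, e3, dfac_step (show 1 ≤ d - 2 by omega), e1]
  ring

lemma evH_formula {d : ℕ} (n : ℕ) (hd : 2 ≤ d) :
    evH d n = ((n + d - 1).choose (d - 1) : ℝ) - ((n + d - 3).choose (d - 1) : ℝ) := by
  unfold evH
  rw [if_neg (by omega), if_neg (by omega)]

lemma evH0_zero : evH 0 0 = 1 := by unfold evH; rw [if_pos rfl, if_pos rfl]

lemma evH0_two : evH 0 2 = -1 := by unfold evH; rw [if_pos rfl, if_neg (by omega), if_pos rfl]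

lemma evH0_other {n : ℕ} (h1 : n ≠ 0) (h2 : n ≠ 2) : evH 0 n = 0 := by
  unfold evH; rw [if_pos rfl, if_neg h1, if_neg h2]

lemma evH1_le {n : ℕ} (h : n ≤ 1) : evH 1 n = 1 := by
  unfold evH; rw [if_neg (by omega), if_pos rfl, if_pos h]

lemma evH1_ge {n : ℕ} (h : 2 ≤ n) : evH 1 n = 0 := by
  unfold evH; rw [if_neg (by omega), if_pos rfl, if_neg (by omega)]

lemma pascal4 (a s : ℕ) :
    (a+4).choose (s+2) + 2*((a+1).choose (s+2)) + a.choose s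
      = 2*((a+3).choose (s+2)) + (a+2).choose s + a.choose (s+2) := by
  simp only [show a+4 = a+3+1 from rfl, show a+3 = a+2+1 from rfl,
    show a+2 = a+1+1 from rfl, show s+2 = s+1+1 from rfl,
    Nat.choose_succ_succ]
  ring

lemma evH_zero {d : ℕ} (hd : 1 ≤ d) : evH d 0 = 1 := by
  rcases Nat.lt_or_ge d 2 with h | h
  · have : d = 1 := by omega
    subst this; exact evH1_le (by omega)
  · rw [evH_formula 0 h, show 0 + d - 1 = d - 1 from by omega,
      Nat.choose_self, Nat.choose_eq_zero_of_lt (by omega)]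
    norm_num

lemma evH_two (n : ℕ) : evH 2 (n + 1) = 2 := by
  rw [evH_formula _ le_rfl, show n+1+2-1 = n+2 from by omega, show n+1+2-3 = n from by omega,
    Nat.choose_one_right, Nat.choose_one_right]
  push_cast; ring

lemma evH_three (n : ℕ) : evH 3 n = 2 * (n : ℝ) + 1 := by
  rw [evH_formula _ (by omega), show n+3-1 = n+2 from by omega, show n+3-3 = n from by omega,
    show (3:ℕ)-1 = 1+1 from rfl]
  rw [show n+2 = n+1+1 from rfl, Nat.choose_succ_succ, show n+1 = n+1 from rfl]
  rw [show (n+1).choose (1+1) = n.choose 1 + n.choose (1+1) from Nat.choose_succ_succ n 1,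
    Nat.choose_one_right, Nat.choose_one_right]
  push_cast; ring

lemma evH_B1 {d : ℕ} (hd : 2 ≤ d) (m : ℕ) :
    evH d (m + 2) + evH d m = 2 * evH d (m + 1) + evH (d - 2) (m + 2) := by
  rcases Nat.lt_or_ge d 4 with h | h
  · interval_cases d
    · -- d = 2
      rw [show (2:ℕ)-2 = 0 from rfl]
      rcases m with _ | m
      · rw [show (0:ℕ)+2 = 1+1 from rfl, evH_two, evH_zero (by omega),
          show evH 2 (0+1) = 2 from evH_two 0, show (1:ℕ)+1 = 2 from rfl, evH0_two]
        norm_num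
      · rw [show m+1+2 = (m+2)+1 from rfl, evH_two, show m+1+1 = m+1+1 from rfl,
          show evH 2 (m+1) = 2 from evH_two m, show evH 2 (m+1+1) = 2 from evH_two (m+1),
          evH0_other (by omega) (by omega)]
        norm_num
    · -- d = 3
      rw [evH_three, evH_three, evH_three, show (3:ℕ)-2 = 1 from rfl,
        evH1_ge (by omega)]
      push_cast; ring
  · obtain ⟨s, rfl⟩ : ∃ s, d = s + 4 := ⟨d - 4, by omega⟩
    rw [show s+4-2 = s+2 from by omega]
    rw [evH_formula _ (by omega), evH_formula _ (by omega), evH_formula _ (by omega),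
      evH_formula _ (by omega)]
    simp only [show m+2+(s+4)-1 = (m+s+1)+4 from by omega,
      show m+2+(s+4)-3 = (m+s+1)+2 from by omega,
      show m+(s+4)-1 = (m+s+1)+2 from by omega,
      show m+(s+4)-3 = (m+s+1) from by omega,
      show m+1+(s+4)-1 = (m+s+1)+3 from by omega,
      show m+1+(s+4)-3 = (m+s+1)+1 from by omega,
      show m+2+(s+2)-1 = (m+s+1)+2 from by omega,
      show m+2+(s+2)-3 = (m+s+1) from by omega,
      show s+4-1 = (s+1)+2 from by omega,
      show s+2-1 = s+1 from by omega]
    have key := pascal4 (m+s+1) (s+1)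
    have key' : (((m+s+1)+4).choose ((s+1)+2) : ℝ) + 2*(((m+s+1)+1).choose ((s+1)+2))
        + (m+s+1).choose (s+1)
        = 2*(((m+s+1)+3).choose ((s+1)+2)) + ((m+s+1)+2).choose (s+1)
        + (m+s+1).choose ((s+1)+2) := by exact_mod_cast key
    linarith

lemma evH_H2 {d : ℕ} (hd : 2 ≤ d) : evH d 1 = 2 * evH d 0 + evH (d - 2) 1 := by
  rcases Nat.lt_or_ge d 4 with h | h
  · interval_cases d
    · rw [show (2:ℕ)-2 = 0 from rfl, show evH 2 1 = 2 from evH_two 0, evH_zero (by omega),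
        evH0_other (by omega) (by omega)]
      norm_num
    · rw [show (3:ℕ)-2 = 1 from rfl, evH_three, evH_zero (by omega), evH1_le le_rfl]
      push_cast; ring
  · obtain ⟨s, rfl⟩ : ∃ s, d = s + 4 := ⟨d - 4, by omega⟩
    rw [show s+4-2 = s+2 from by omega, evH_zero (by omega),
      evH_formula _ (by omega), evH_formula _ (by omega)]
    simp only [show 1+(s+4)-1 = s+4 from by omega, show 1+(s+4)-3 = s+2 from by omega,
      show s+4-1 = s+3 from by omega, show 1+(s+2)-1 = s+2 from by omega,
      show 1+(s+2)-3 = s from by omega, show s+2-1 = s+1 from by omega]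
    rw [show s+4 = (s+3)+1 from rfl, Nat.choose_succ_self_right,
      Nat.choose_eq_zero_of_lt (by omega), show s+2 = (s+1)+1 from rfl,
      Nat.choose_succ_self_right, Nat.choose_eq_zero_of_lt (by omega)]
    push_cast; ring

lemma fact_dfac (t : ℕ) : t ! = t‼ * (t - 1)‼ := by
  cases t with
  | zero => rfl
  | succ n => rw [Nat.factorial_eq_mul_doubleFactorial]; simp

lemma evS_rec {d t : ℕ} (hd : 2 ≤ d) (ht : 1 ≤ t) :
    ((d + 2 * t - 2 : ℕ) : ℝ) * evS d t
      = 2 * (t : ℝ) * evS d (t - 1)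
        + ∑ j ∈ Finset.range (t / 2 + 1), evH (d - 2) (t - 2 * j) * ((t : ℝ) * evL d (t - 1) j) := by
  have step1 : ((d + 2 * t - 2 : ℕ) : ℝ) * evS d t
      = ∑ k ∈ Finset.range (t / 2 + 1), evH d (t - 2 * k) * ((t : ℝ) * evL d (t - 1) k)
        + ∑ k ∈ Finset.range (t / 2 + 1), evH d (t - 2 * k) * (((2 * k : ℕ) : ℝ) * evL d t k) := by
    unfold evS
    rw [Finset.mul_sum, ← Finset.sum_add_distrib]
    refine Finset.sum_congr rfl fun k hk => ?_
    have hk' : 2 * k ≤ t := by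
      have := Finset.mem_range.mp hk; omega
    have h1 : ((d + 2 * t - 2 : ℕ) : ℝ) = ((d + 2 * t - 2 * k - 2 : ℕ) : ℝ) + ((2 * k : ℕ) : ℝ) := by
      have h : (d + 2 * t - 2 : ℕ) = (d + 2 * t - 2 * k - 2) + 2 * k := by omega
      rw [h]; push_cast; ring
    calc ((d + 2 * t - 2 : ℕ) : ℝ) * (evH d (t - 2 * k) * evL d t k)
        = evH d (t - 2 * k) * (((d + 2 * t - 2 * k - 2 : ℕ) : ℝ) * evL d t k)
          + evH d (t - 2 * k) * (((2 * k : ℕ) : ℝ) * evL d t k) := by rw [h1]; ring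
      _ = _ := by rw [evL_R1 (by omega) ht hk']
  have step2 : ∑ k ∈ Finset.range (t / 2 + 1), evH d (t - 2 * k) * (((2 * k : ℕ) : ℝ) * evL d t k)
      = ∑ j ∈ Finset.range (t / 2), evH d (t - 2 * (j + 1)) * ((t : ℝ) * evL d (t - 1) j) := by
    rw [Finset.sum_range_succ']
    simp only [Nat.mul_zero, Nat.cast_zero, zero_mul, mul_zero, add_zero]
    refine Finset.sum_congr rfl fun j hj => ?_
    rw [evL_R2 ht (by omega)]
    norm_num
  rw [step1, step2]
  -- termwise key on range (t/2)
  have key : ∀ j ∈ Finset.range (t / 2),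
      evH d (t - 2 * j) * ((t : ℝ) * evL d (t - 1) j)
        + evH d (t - 2 * (j + 1)) * ((t : ℝ) * evL d (t - 1) j)
      = 2 * (t : ℝ) * (evH d (t - 1 - 2 * j) * evL d (t - 1) j)
        + evH (d - 2) (t - 2 * j) * ((t : ℝ) * evL d (t - 1) j) := by
    intro j hj
    have hj' : 2 * j + 2 ≤ t := by
      have := Finset.mem_range.mp hj; omega
    rw [show t - 2 * j = (t - 2 * j - 2) + 2 from by omega,
      show t - 2 * (j + 1) = t - 2 * j - 2 from by omega,
      show t - 1 - 2 * j = (t - 2 * j - 2) + 1 from by omega]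
    linear_combination (evH_B1 hd (t - 2 * j - 2)) * ((t : ℝ) * evL d (t - 1) j)
  rcases Nat.even_or_odd t with he | ho
  · -- t even, boundary term
    have hm1 : 1 ≤ t / 2 := by
      rcases he with ⟨u, hu⟩; omega
    have hS : evS d (t - 1)
        = ∑ j ∈ Finset.range (t / 2), evH d (t - 1 - 2 * j) * evL d (t - 1) j := by
      unfold evS
      rw [show (t - 1) / 2 + 1 = t / 2 from by rcases he with ⟨u, hu⟩; omega]
    have hbound : evH d (t - 2 * (t / 2)) * ((t : ℝ) * evL d (t - 1) (t / 2))
        = evH (d - 2) (t - 2 * (t / 2)) * ((t : ℝ) * evL d (t - 1) (t / 2)) := by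
      rw [show t - 2 * (t / 2) = 0 from by rcases he with ⟨u, hu⟩; omega]
      rcases eq_or_lt_of_le hd with h2 | h3
      · rw [← h2, show (2:ℕ) - 2 = 0 from rfl, evH_zero (by omega), evH0_zero]
      · rw [evH_zero (by omega), evH_zero (by omega)]
    rw [Finset.sum_range_succ, Finset.sum_range_succ (n := t / 2), hS, Finset.mul_sum]
    have comb : ∑ j ∈ Finset.range (t / 2), evH d (t - 2 * j) * ((t : ℝ) * evL d (t - 1) j)
        + ∑ j ∈ Finset.range (t / 2), evH d (t - 2 * (j + 1)) * ((t : ℝ) * evL d (t - 1) j)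
        = ∑ j ∈ Finset.range (t / 2), (2 * (t : ℝ) * (evH d (t - 1 - 2 * j) * evL d (t - 1) j)
            + evH (d - 2) (t - 2 * j) * ((t : ℝ) * evL d (t - 1) j)) := by
      rw [← Finset.sum_add_distrib]
      exact Finset.sum_congr rfl key
    rw [Finset.sum_add_distrib] at comb
    linear_combination comb + hbound
  · -- t odd
    have hS : evS d (t - 1)
        = ∑ j ∈ Finset.range (t / 2 + 1), evH d (t - 1 - 2 * j) * evL d (t - 1) j := by
      unfold evS
      rw [show (t - 1) / 2 = t / 2 from by rcases ho with ⟨u, hu⟩; omega]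
    have hbound : evH d (t - 2 * (t / 2)) * ((t : ℝ) * evL d (t - 1) (t / 2))
        = 2 * (t : ℝ) * (evH d (t - 1 - 2 * (t / 2)) * evL d (t - 1) (t / 2))
          + evH (d - 2) (t - 2 * (t / 2)) * ((t : ℝ) * evL d (t - 1) (t / 2)) := by
      rw [show t - 2 * (t / 2) = 1 from by rcases ho with ⟨u, hu⟩; omega,
        show t - 1 - 2 * (t / 2) = 0 from by rcases ho with ⟨u, hu⟩; omega]
      linear_combination (evH_H2 hd) * ((t : ℝ) * evL d (t - 1) (t / 2))
    rw [Finset.sum_range_succ, Finset.sum_range_succ (n := t / 2), hS,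
      Finset.sum_range_succ (n := t / 2)]
    have comb : ∑ j ∈ Finset.range (t / 2), evH d (t - 2 * j) * ((t : ℝ) * evL d (t - 1) j)
        + ∑ j ∈ Finset.range (t / 2), evH d (t - 2 * (j + 1)) * ((t : ℝ) * evL d (t - 1) j)
        = ∑ j ∈ Finset.range (t / 2), (2 * (t : ℝ) * (evH d (t - 1 - 2 * j) * evL d (t - 1) j)
            + evH (d - 2) (t - 2 * j) * ((t : ℝ) * evL d (t - 1) j)) := by
      rw [← Finset.sum_add_distrib]
      exact Finset.sum_congr rfl key
    rw [Finset.sum_add_distrib, ← Finset.mul_sum] at comb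
    linear_combination comb + hbound

lemma evC_eq {d t : ℕ} (hd : 2 ≤ d) (ht : 1 ≤ t) :
    ∑ j ∈ Finset.range (t / 2 + 1), evH (d - 2) (t - 2 * j) * ((t : ℝ) * evL d (t - 1) j)
      = ((d - 2 : ℕ) : ℝ) * evS (d - 2) t := by
  rcases eq_or_lt_of_le hd with h2 | h3
  · -- d = 2 : both sides vanish
    rw [← h2]
    norm_num
    rcases Nat.even_or_odd t with he | ho
    · -- t even : two boundary terms cancel
      have hm1 : 1 ≤ t / 2 := by rcases he with ⟨u, hu⟩; omega
      have hLeq : evL 2 (t - 1) (t / 2) = evL 2 (t - 1) (t / 2 - 1) := by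
        unfold evL
        congr 2
        rw [show 2 * (t / 2) = t from by rcases he with ⟨u, hu⟩; omega,
          show 2 + 2 * (t - 1) - t - 2 = t - 2 from by rcases he with ⟨u, hu⟩; omega,
          show 2 * (t / 2 - 1) = t - 2 from by rcases he with ⟨u, hu⟩; omega,
          show 2 + 2 * (t - 1) - (t - 2) - 2 = t from by rcases he with ⟨u, hu⟩; omega]
        ring
      rw [show t / 2 + 1 = (t / 2 - 1) + 1 + 1 from by omega,
        Finset.sum_range_succ, Finset.sum_range_succ]
      rw [show t - 2 * (t / 2 - 1 + 1) = 0 from by rcases he with ⟨u, hu⟩; omega,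
        show t - 2 * (t / 2 - 1) = 2 from by rcases he with ⟨u, hu⟩; omega,
        show t / 2 - 1 + 1 = t / 2 from by omega, evH0_zero, evH0_two]
      have hrest : ∑ j ∈ Finset.range (t / 2 - 1), evH 0 (t - 2 * j) * ((t : ℝ) * evL 2 (t - 1) j) = 0 := by
        refine Finset.sum_eq_zero fun j hj => ?_
        have := Finset.mem_range.mp hj
        rw [evH0_other (by rcases he with ⟨u, hu⟩; omega) (by rcases he with ⟨u, hu⟩; omega)]
        ring
      rw [hrest, hLeq]
      ring
    · refine Finset.sum_eq_zero fun j hj => ?_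
      have := Finset.mem_range.mp hj
      rw [evH0_other (by rcases ho with ⟨u, hu⟩; omega) (by rcases ho with ⟨u, hu⟩; omega)]
      ring
  · -- d ≥ 3
    unfold evS
    rw [Finset.mul_sum]
    refine Finset.sum_congr rfl fun j hj => ?_
    rw [evL_R3 (by omega) ht]
    ring

lemma evS_zero {d : ℕ} (hd : 1 ≤ d) : evS d 0 = 1 := by
  unfold evS
  rw [show (0 : ℕ) / 2 + 1 = 1 from rfl, Finset.sum_range_one, evH_zero hd]
  unfold evL
  rw [show (2 * 0)‼ = 1 from rfl, show d + 2 * 0 - 2 * 0 - 2 = d - 2 from by omega]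
  rw [Nat.factorial_zero, one_mul, one_mul, div_self]
  exact_mod_cast (Nat.doubleFactorial_pos _).ne'

lemma evS_one_dim (t : ℕ) : evS 1 t = 1 := by
  unfold evS
  rw [Finset.sum_range_succ]
  have hrest : ∑ k ∈ Finset.range (t / 2), evH 1 (t - 2 * k) * evL 1 t k = 0 := by
    refine Finset.sum_eq_zero fun k hk => ?_
    have := Finset.mem_range.mp hk
    rw [evH1_ge (by omega)]
    ring
  rw [hrest, evH1_le (by omega), zero_add, one_mul]
  unfold evL
  have hnum : t ! * (1 - 2)‼ = (2 * (t / 2))‼ * (1 + 2 * t - 2 * (t / 2) - 2)‼ := by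
    rw [show (1 : ℕ) - 2 = 0 from rfl, Nat.doubleFactorial, mul_one]
    rcases Nat.even_or_odd t with he | ho
    · rw [show 2 * (t / 2) = t from by rcases he with ⟨u, hu⟩; omega,
        show 1 + 2 * t - t - 2 = t - 1 from by omega]
      exact fact_dfac t
    · rw [show 2 * (t / 2) = t - 1 from by rcases ho with ⟨u, hu⟩; omega,
        show 1 + 2 * t - (t - 1) - 2 = t from by rcases ho with ⟨u, hu⟩; omega]
      rw [fact_dfac t]; ring
  rw [hnum, div_self]
  exact_mod_cast (Nat.mul_pos (Nat.doubleFactorial_pos _) (Nat.doubleFactorial_pos _)).ne'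

lemma evS_eq_one : ∀ d, 1 ≤ d → ∀ t, evS d t = 1 := by
  intro d
  induction d using Nat.strong_induction_on with
  | _ d ih =>
    intro hd t
    rcases eq_or_lt_of_le hd with h1 | h2
    · rw [← h1]; exact evS_one_dim t
    · induction t with
      | zero => exact evS_zero (by omega)
      | succ n ihn =>
        have hrec := evS_rec (d := d) (t := n + 1) (by omega) (by omega)
        rw [evC_eq (by omega) (by omega), show n + 1 - 1 = n from rfl, ihn] at hrec
        have hS2 : ((d - 2 : ℕ) : ℝ) * evS (d - 2) (n + 1) = ((d - 2 : ℕ) : ℝ) := by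
          rcases eq_or_lt_of_le (show 2 ≤ d from h2) with h2' | h3
          · rw [← h2']; norm_num
          · rw [ih (d - 2) (by omega) (by omega) (n + 1), mul_one]
        rw [hS2] at hrec
        have hcoeff : ((d + 2 * (n + 1) - 2 : ℕ) : ℝ) = 2 * ((n : ℝ) + 1) + ((d - 2 : ℕ) : ℝ) := by
          have : (d + 2 * (n + 1) - 2 : ℕ) = 2 * (n + 1) + (d - 2) := by omega
          rw [this]; push_cast; ring
        have hpos : (0 : ℝ) < ((d + 2 * (n + 1) - 2 : ℕ) : ℝ) := by
          have : 1 ≤ d + 2 * (n + 1) - 2 := by omega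
          exact_mod_cast Nat.lt_of_lt_of_le Nat.zero_lt_one this
        apply mul_left_cancel₀ hpos.ne'
        rw [hrec, mul_one, hcoeff]
        push_cast
        ring

/-- The eigenvalues `λ_k = t!(d−2)‼/((2k)‼(d+2t−2k−2)‼)` of `t` copies of a real Haar
random state are strictly increasing in `k` on `0 ≤ k ≤ ⌊t/2⌋`, and with multiplicities
`α_k = C(d+t−2k−1, d−1) − C(d+t−2k−3, d−1)` they satisfy `∑_k α_k λ_k = 1`. -/
theorem eigenvalues_increasing_and_trace_one (d t : ℕ) (hd : 2 ≤ d) (ht : 1 ≤ t) :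
    (∀ k₁ k₂ : ℕ, k₁ < k₂ → k₂ ≤ t / 2 →
      ((t ! * (d - 2)‼ : ℕ) : ℝ) / (((2 * k₁)‼ * (d + 2 * t - 2 * k₁ - 2)‼ : ℕ) : ℝ) <
        ((t ! * (d - 2)‼ : ℕ) : ℝ) /
          (((2 * k₂)‼ * (d + 2 * t - 2 * k₂ - 2)‼ : ℕ) : ℝ)) ∧
    ∑ k ∈ Finset.range (t / 2 + 1),
        (((d + t - 2 * k - 1).choose (d - 1) : ℝ) -
            ((d + t - 2 * k - 3).choose (d - 1) : ℝ)) *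
          (((t ! * (d - 2)‼ : ℕ) : ℝ) /
            (((2 * k)‼ * (d + 2 * t - 2 * k - 2)‼ : ℕ) : ℝ)) = 1 := by
  constructor
  · -- strict monotonicity
    have step : ∀ k : ℕ, k + 1 ≤ t / 2 →
        (2 * (k + 1))‼ * (d + 2 * t - 2 * (k + 1) - 2)‼ < (2 * k)‼ * (d + 2 * t - 2 * k - 2)‼ := by
      intro k hk
      have h2k : 2 * (k + 1) ≤ t := by omega
      have ha : 1 ≤ d + 2 * t - 2 * k - 2 := by omega
      rw [dfac_step (show 1 ≤ 2 * (k + 1) from by omega), dfac_step ha,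
        show 2 * (k + 1) - 2 = 2 * k from by omega,
        show d + 2 * t - 2 * (k + 1) - 2 = d + 2 * t - 2 * k - 2 - 2 from by omega]
      have hlt : 2 * (k + 1) < d + 2 * t - 2 * k - 2 := by omega
      have p1 := Nat.doubleFactorial_pos (2 * k)
      have p2 := Nat.doubleFactorial_pos (d + 2 * t - 2 * k - 2 - 2)
      refine lt_of_lt_of_eq
        (mul_lt_mul_of_pos_right (mul_lt_mul_of_pos_right hlt p1) p2) (by ring)
    have chain : ∀ g k : ℕ, k + g + 1 ≤ t / 2 →
        (2 * (k + g + 1))‼ * (d + 2 * t - 2 * (k + g + 1) - 2)‼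
          < (2 * k)‼ * (d + 2 * t - 2 * k - 2)‼ := by
      intro g
      induction g with
      | zero => intro k hk; exact step k hk
      | succ g ihg =>
        intro k hk
        calc (2 * (k + (g + 1) + 1))‼ * (d + 2 * t - 2 * (k + (g + 1) + 1) - 2)‼
            = (2 * ((k + 1) + g + 1))‼ * (d + 2 * t - 2 * ((k + 1) + g + 1) - 2)‼ := by
              rw [show k + (g + 1) + 1 = (k + 1) + g + 1 from by omega]
          _ < (2 * (k + 1))‼ * (d + 2 * t - 2 * (k + 1) - 2)‼ := ihg (k + 1) (by omega)
          _ < (2 * k)‼ * (d + 2 * t - 2 * k - 2)‼ := step k (by omega)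
    intro k₁ k₂ hlt12 hk2
    have hden : (2 * k₂)‼ * (d + 2 * t - 2 * k₂ - 2)‼ < (2 * k₁)‼ * (d + 2 * t - 2 * k₁ - 2)‼ := by
      have := chain (k₂ - k₁ - 1) k₁ (by omega)
      rwa [show k₁ + (k₂ - k₁ - 1) + 1 = k₂ from by omega] at this
    apply div_lt_div_of_pos_left
    · positivity
    · positivity
    · exact_mod_cast hden
  · rw [← evS_eq_one d (by omega) t]
    unfold evS evL
    refine Finset.sum_congr rfl fun k hk => ?_
    have hk' : 2 * k ≤ t := by have := Finset.mem_range.mp hk; omega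
    rw [evH_formula _ hd, show t - 2 * k + d - 1 = d + t - 2 * k - 1 from by omega,
      show t - 2 * k + d - 3 = d + t - 2 * k - 3 from by omega]
end

section
/- Let Φ be the orthogonal twirling channel Φ(ρ) = ∫_{O(d)} O^{⊗t} ρ (Oᵀ)^{⊗t} dμ(O) on operators over (ℂ^d)^{⊗t}. Then: (i) for every real unit vector ψ ∈ ℝ^d ⊆ ℂ^d, Φ((|ψ⟩⟨ψ|)^{⊗t}) = ρ_R where ρ_R = ∫_{O(d)} (O|0⟩⟨0|Oᵀ)^{⊗t} dμ(O); (ii) for any probability measure λ on real unit vectors, Φ(∫ (|ψ⟩⟨ψ|)^{⊗t} dλ(ψ)) = ρ_R; and consequently, since Φ is trace-preserving, unital, and contractive in every Schatten p-norm while fixing the complex Haar average ρ_C, one has ‖ρ_S − ρ_C‖_p ≥ ‖ρ_R − ρ_C‖_p for every mixture ρ_S of t-fold tensor powers of real states and every p ∈ [1, ∞]. -/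
open MeasureTheory Matrix

/-- The measurable structure on real `d×d` matrices (the product σ-algebra). -/
instance matrixMeasurableSpace (d : ℕ) : MeasurableSpace (Matrix (Fin d) (Fin d) ℝ) :=
  inferInstanceAs (MeasurableSpace (Fin d → Fin d → ℝ))

/-- Entries `∏ᵢ M(xᵢ, yᵢ)` of the `t`-fold tensor (Kronecker) power `M^{⊗t}` of a real
`d×d` matrix, as a complex matrix on the index set `[d]^t`. -/
noncomputable def kronPow (d t : ℕ) (M : Matrix (Fin d) (Fin d) ℝ) :
    Matrix (Fin t → Fin d) (Fin t → Fin d) ℂ :=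
  Matrix.of fun x y => ∏ i, (M (x i) (y i) : ℂ)

/-- The orthogonal twirling channel
`Φ(A) = ∫_{O(d)} O^{⊗t} A (Oᵀ)^{⊗t} dμ(O)`, defined entrywise. -/
noncomputable def twirl (d t : ℕ) (μ : Measure ↥(Matrix.orthogonalGroup (Fin d) ℝ))
    (A : Matrix (Fin t → Fin d) (Fin t → Fin d) ℂ) :
    Matrix (Fin t → Fin d) (Fin t → Fin d) ℂ :=
  Matrix.of fun x y =>
    ∫ O : ↥(Matrix.orthogonalGroup (Fin d) ℝ),
      (kronPow d t (O : Matrix (Fin d) (Fin d) ℝ) * A *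
        kronPow d t ((O : Matrix (Fin d) (Fin d) ℝ))ᵀ) x y ∂μ

/-- `ρ_R = ∫_{O(d)} (O|e₀⟩⟨e₀|Oᵀ)^{⊗t} dμ(O)`, the average of `t` copies of a real Haar
random state, defined entrywise (`e₀` is the fiducial basis index `|0⟩`). -/
noncomputable def rhoR (d t : ℕ) (e₀ : Fin d)
    (μ : Measure ↥(Matrix.orthogonalGroup (Fin d) ℝ)) :
    Matrix (Fin t → Fin d) (Fin t → Fin d) ℂ :=
  Matrix.of fun x y =>
    ∫ O : ↥(Matrix.orthogonalGroup (Fin d) ℝ),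
      (∏ i, ((O : Matrix (Fin d) (Fin d) ℝ) (x i) e₀ : ℂ)) *
        ∏ i, ((O : Matrix (Fin d) (Fin d) ℝ) (y i) e₀ : ℂ) ∂μ

/-- The average of `t`-fold tensor powers of real states sampled from a measure `ν` on
the real unit sphere, defined entrywise. -/
noncomputable def rhoS (d t : ℕ) (ν : Measure {ψ : Fin d → ℝ // ∑ i, ψ i ^ 2 = 1}) :
    Matrix (Fin t → Fin d) (Fin t → Fin d) ℂ :=
  Matrix.of fun x y =>
    ∫ ψ, (∏ i, ((ψ : Fin d → ℝ) (x i) : ℂ)) * ∏ i, ((ψ : Fin d → ℝ) (y i) : ℂ) ∂ν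

/-! ### Auxiliary material -/

namespace TwirlAux

variable {d t : ℕ}

abbrev OG (d : ℕ) := ↥(Matrix.orthogonalGroup (Fin d) ℝ)

abbrev Sph (d : ℕ) := {ψ : Fin d → ℝ // ∑ i, ψ i ^ 2 = 1}

lemma measurable_coe_OG : Measurable (fun O : OG d => (O : Matrix (Fin d) (Fin d) ℝ)) :=
  measurable_subtype_coe

lemma measurable_entry (i j : Fin d) :
    Measurable (fun O : OG d => (O : Matrix (Fin d) (Fin d) ℝ) i j) :=
  ((measurable_pi_apply j).comp ((measurable_pi_apply i).comp measurable_coe_OG))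

lemma measurable_matrix_of {α : Type*} [MeasurableSpace α]
    {f : α → Matrix (Fin d) (Fin d) ℝ} (h : ∀ i j, Measurable fun a => f a i j) :
    Measurable f :=
  measurable_pi_lambda _ fun i => measurable_pi_lambda _ fun j => h i j

lemma measurable_mul_OG : Measurable (fun p : OG d × OG d => p.1 * p.2) := by
  apply Measurable.subtype_mk
  apply measurable_matrix_of
  intro i j
  simp only [Matrix.mul_apply]
  exact Finset.measurable_sum _ fun k _ =>
    ((measurable_entry i k).comp measurable_fst).mul ((measurable_entry k j).comp measurable_snd)

lemma coe_inv_OG (O : OG d) :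
    ((O⁻¹ : OG d) : Matrix (Fin d) (Fin d) ℝ) = (O : Matrix (Fin d) (Fin d) ℝ)ᵀ := by
  ext i j
  simp [Matrix.UnitaryGroup.inv_apply, Matrix.conjTranspose_apply]

lemma measurable_inv_OG : Measurable (fun O : OG d => O⁻¹) := by
  apply Measurable.subtype_mk
  apply measurable_matrix_of
  intro i j
  have : (fun O : OG d => ((O⁻¹ : OG d) : Matrix (Fin d) (Fin d) ℝ) i j)
      = fun O : OG d => (O : Matrix (Fin d) (Fin d) ℝ) j i := by
    funext O; rw [coe_inv_OG]; rfl
  exact this ▸ measurable_entry j i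

section RightInv
variable (μ : Measure (OG d)) [IsProbabilityMeasure μ]

def LInv (μ : Measure (OG d)) : Prop := ∀ O : OG d, μ.map (fun P => O * P) = μ

lemma measurable_mul_left (y : OG d) : Measurable (fun x : OG d => y * x) :=
  measurable_mul_OG.comp (measurable_const.prodMk measurable_id)

lemma measurable_mul_right (a : OG d) : Measurable (fun x : OG d => x * a) :=
  measurable_mul_OG.comp (measurable_id.prodMk measurable_const)

lemma lint_left (hμ : LInv μ) {f : OG d → ENNReal} (hf : Measurable f) (y : OG d) :
    ∫⁻ x, f (y * x) ∂μ = ∫⁻ x, f x ∂μ := by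
  conv_rhs => rw [← hμ y]
  rw [lintegral_map hf (measurable_mul_left y)]

lemma lint_invmul (hμ : LInv μ) {f : OG d → ENNReal} (hf : Measurable f) (y : OG d) :
    ∫⁻ x, f (x⁻¹ * y) ∂μ = ∫⁻ x, f x⁻¹ ∂μ := by
  have hg : Measurable fun x : OG d => f (x⁻¹ * y) :=
    hf.comp (measurable_mul_OG.comp (measurable_inv_OG.prodMk measurable_const))
  have := lint_left μ hμ hg y
  rw [← this]
  congr 1; funext x
  simp [mul_assoc]

lemma lint_inv (hμ : LInv μ) {f : OG d → ENNReal} (hf : Measurable f) :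
    ∫⁻ x, f x⁻¹ ∂μ = ∫⁻ x, f x ∂μ := by
  have hunc : Measurable (Function.uncurry fun x y : OG d => f (x⁻¹ * y)) :=
    hf.comp (measurable_mul_OG.comp
      ((measurable_inv_OG.comp measurable_fst).prodMk measurable_snd))
  have hswap := lintegral_lintegral_swap (μ := μ) (ν := μ) hunc.aemeasurable
  have hL : ∫⁻ x, ∫⁻ y, f (x⁻¹ * y) ∂μ ∂μ = ∫⁻ x, f x ∂μ := by
    have : ∀ x : OG d, ∫⁻ y, f (x⁻¹ * y) ∂μ = ∫⁻ x, f x ∂μ := fun x =>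
      lint_left μ hμ hf x⁻¹
    simp only [this, lintegral_const, measure_univ, mul_one]
  have hR : ∫⁻ y, ∫⁻ x, f (x⁻¹ * y) ∂μ ∂μ = ∫⁻ x, f x⁻¹ ∂μ := by
    have : ∀ y : OG d, ∫⁻ x, f (x⁻¹ * y) ∂μ = ∫⁻ x, f x⁻¹ ∂μ := fun y =>
      lint_invmul μ hμ hf y
    simp only [this, lintegral_const, measure_univ, mul_one]
  rw [← hL, hswap, hR]

lemma lint_right (hμ : LInv μ) {f : OG d → ENNReal} (hf : Measurable f) (a : OG d) :
    ∫⁻ x, f (x * a) ∂μ = ∫⁻ x, f x ∂μ := by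
  have hg : Measurable fun x : OG d => f (x * a) := hf.comp (measurable_mul_right a)
  calc ∫⁻ x, f (x * a) ∂μ = ∫⁻ x, f (x⁻¹ * a) ∂μ := by
        conv_lhs => rw [← lint_inv μ hμ hg]
      _ = ∫⁻ x, f x⁻¹ ∂μ := lint_invmul μ hμ hf a
      _ = ∫⁻ x, f x ∂μ := lint_inv μ hμ hf

lemma map_mul_right_eq (hμ : LInv μ) (a : OG d) : μ.map (fun x => x * a) = μ := by
  ext s hs
  rw [Measure.map_apply (measurable_mul_right a) hs]
  have h0 : (fun x : OG d => s.indicator (1 : OG d → ENNReal) (x * a))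
      = ((fun x : OG d => x * a) ⁻¹' s).indicator 1 := by
    funext x; rfl
  have h1 : μ ((fun x : OG d => x * a) ⁻¹' s) = ∫⁻ x, s.indicator 1 (x * a) ∂μ := by
    rw [show (fun x : OG d => s.indicator (1 : OG d → ENNReal) (x * a))
      = ((fun x : OG d => x * a) ⁻¹' s).indicator 1 from h0,
      lintegral_indicator_one (hs.preimage (measurable_mul_right a))]
  rw [h1, lint_right μ hμ (measurable_one.indicator hs) a, lintegral_indicator_one hs]

lemma integral_mul_right (hμ : LInv μ) {f : OG d → ℂ} (hf : Measurable f) (a : OG d) :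
    ∫ x, f (x * a) ∂μ = ∫ x, f x ∂μ := by
  conv_rhs => rw [← map_mul_right_eq μ hμ a]
  rw [integral_map (measurable_mul_right a).aemeasurable
    hf.stronglyMeasurable.aestronglyMeasurable]

end RightInv

/-- Existence of an orthogonal matrix with prescribed unit column. -/
lemma exists_orthogonal_col (e₀ : Fin d) (ψ : Fin d → ℝ) (hψ : ∑ i, ψ i ^ 2 = 1) :
    ∃ O₀ : OG d, ∀ j, (O₀ : Matrix (Fin d) (Fin d) ℝ) j e₀ = ψ j := by
  set ψ' : EuclideanSpace ℝ (Fin d) := (WithLp.equiv 2 (Fin d → ℝ)).symm ψ with hψ'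
  have happ : ∀ j, ψ' j = ψ j := fun j => rfl
  have hnorm : ‖ψ'‖ = 1 := by
    rw [EuclideanSpace.norm_eq]
    simp only [happ, Real.norm_eq_abs, sq_abs]
    rw [hψ, Real.sqrt_one]
  have horth : Orthonormal ℝ (Set.restrict {e₀} (fun _ : Fin d => ψ')) := by
    rw [orthonormal_iff_ite]
    intro i j
    have hij : i = j := Subtype.ext ((Set.mem_singleton_iff.mp i.2).trans
      (Set.mem_singleton_iff.mp j.2).symm)
    subst hij
    simp only [if_pos rfl, Set.restrict_apply]
    rw [real_inner_self_eq_norm_sq]; show ‖ψ'‖ ^ 2 = _; rw [hnorm]; norm_num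
  have card : Module.finrank ℝ (EuclideanSpace ℝ (Fin d)) = Fintype.card (Fin d) :=
    finrank_euclideanSpace
  obtain ⟨b, hb⟩ := horth.exists_orthonormalBasis_extension_of_card_eq card
  have hbe : b e₀ = ψ' := hb e₀ rfl
  refine ⟨⟨Matrix.of fun j i => b i j, ?_⟩, ?_⟩
  · rw [Matrix.mem_unitaryGroup_iff']
    ext i i'
    have : (star (Matrix.of fun j i => b i j) * Matrix.of fun j i => b i j) i i'
        = ∑ j, b i j * b i' j := by
      simp [Matrix.mul_apply, Matrix.star_apply, mul_comm]
    rw [this]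
    have hinner := orthonormal_iff_ite.mp b.orthonormal i i'
    rw [PiLp.inner_apply] at hinner
    simp only [RCLike.inner_apply, starRingEnd_apply, star_trivial] at hinner
    rw [Finset.sum_congr rfl fun j _ => mul_comm ((b i) j) ((b i') j), hinner]
    by_cases h : i = i' <;> simp [h, Matrix.one_apply]
  · intro j
    show b e₀ j = ψ j
    rw [hbe]; exact happ j

/-- Entrywise expansion of the conjugation `O^{⊗t} A (Oᵀ)^{⊗t}`. -/
lemma entry_expand (d t : ℕ) (O : Matrix (Fin d) (Fin d) ℝ)
    (A : Matrix (Fin t → Fin d) (Fin t → Fin d) ℂ) (x y : Fin t → Fin d) :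
    (kronPow d t O * A * kronPow d t Oᵀ) x y
      = ∑ a : Fin t → Fin d, ∑ b : Fin t → Fin d,
          (∏ i, (O (x i) (a i) : ℂ)) * A a b * ∏ i, (O (y i) (b i) : ℂ) := by
  rw [Finset.sum_comm]
  simp only [Matrix.mul_apply, kronPow, Matrix.of_apply, Matrix.transpose_apply,
    Finset.sum_mul]

lemma cast_mulVec (O : Matrix (Fin d) (Fin d) ℝ) (ψ : Fin d → ℝ) (k : Fin d) :
    ((O *ᵥ ψ) k : ℂ) = ∑ j, (O k j : ℂ) * (ψ j : ℂ) := by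
  simp [Matrix.mulVec, dotProduct]

lemma prod_mulVec (O : Matrix (Fin d) (Fin d) ℝ) (ψ : Fin d → ℝ) (z : Fin t → Fin d) :
    (∏ i, ((O *ᵥ ψ) (z i) : ℂ))
      = ∑ a : Fin t → Fin d, ∏ i, (O (z i) (a i) : ℂ) * (ψ (a i) : ℂ) := by
  calc (∏ i, ((O *ᵥ ψ) (z i) : ℂ)) = ∏ i, ∑ j, (O (z i) j : ℂ) * (ψ j : ℂ) := by
        exact Finset.prod_congr rfl fun i _ => cast_mulVec O ψ (z i)
    _ = ∑ a ∈ Fintype.piFinset (fun _ : Fin t => (Finset.univ : Finset (Fin d))),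
          ∏ i, (O (z i) (a i) : ℂ) * (ψ (a i) : ℂ) :=
        Finset.prod_univ_sum _ _
    _ = _ := by rw [Fintype.piFinset_univ]

/-- The rank-one expansion. -/
lemma rank1_expand (O : Matrix (Fin d) (Fin d) ℝ) (ψ : Fin d → ℝ) (x y : Fin t → Fin d) :
    ∑ a : Fin t → Fin d, ∑ b : Fin t → Fin d,
        (∏ i, (O (x i) (a i) : ℂ)) * ((∏ i, (ψ (a i) : ℂ)) * ∏ i, (ψ (b i) : ℂ)) *
          ∏ i, (O (y i) (b i) : ℂ)
      = (∏ i, ((O *ᵥ ψ) (x i) : ℂ)) * ∏ i, ((O *ᵥ ψ) (y i) : ℂ) := by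
  calc ∑ a : Fin t → Fin d, ∑ b : Fin t → Fin d,
        (∏ i, (O (x i) (a i) : ℂ)) * ((∏ i, (ψ (a i) : ℂ)) * ∏ i, (ψ (b i) : ℂ)) *
          ∏ i, (O (y i) (b i) : ℂ)
      = ∑ a : Fin t → Fin d, ∑ b : Fin t → Fin d,
          (∏ i, (O (x i) (a i) : ℂ) * (ψ (a i) : ℂ)) *
            ∏ i, (O (y i) (b i) : ℂ) * (ψ (b i) : ℂ) := by
        refine Finset.sum_congr rfl fun a _ => Finset.sum_congr rfl fun b _ => ?_
        rw [Finset.prod_mul_distrib, Finset.prod_mul_distrib]; ring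
    _ = (∑ a : Fin t → Fin d, ∏ i, (O (x i) (a i) : ℂ) * (ψ (a i) : ℂ)) *
          ∑ b : Fin t → Fin d, ∏ i, (O (y i) (b i) : ℂ) * (ψ (b i) : ℂ) :=
        (Finset.sum_mul_sum _ _ _ _).symm
    _ = _ := by rw [prod_mulVec, prod_mulVec]


/-- Entries of an orthogonal matrix are bounded by 1. -/
lemma entry_abs_le_one (O : OG d) (i j : Fin d) :
    |(O : Matrix (Fin d) (Fin d) ℝ) i j| ≤ 1 := by
  have hmem := O.2
  rw [Matrix.mem_unitaryGroup_iff] at hmem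
  have hrow : ∑ k, (O : Matrix (Fin d) (Fin d) ℝ) i k ^ 2 = 1 := by
    have := congrArg (fun M => M i i) hmem
    simpa [Matrix.mul_apply, Matrix.star_apply, Matrix.one_apply, sq] using this
  have hsq : (O : Matrix (Fin d) (Fin d) ℝ) i j ^ 2 ≤ 1 := by
    rw [← hrow]
    exact Finset.single_le_sum (f := fun k => (O : Matrix (Fin d) (Fin d) ℝ) i k ^ 2)
      (fun k _ => sq_nonneg _) (Finset.mem_univ j)
  exact (sq_le_one_iff_abs_le_one _).mp hsq

lemma sph_abs_le_one (ψ : Sph d) (i : Fin d) : |(ψ : Fin d → ℝ) i| ≤ 1 := by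
  have hsq : (ψ : Fin d → ℝ) i ^ 2 ≤ 1 := by
    have h := Finset.single_le_sum (f := fun k => (ψ : Fin d → ℝ) k ^ 2)
      (fun k _ => sq_nonneg _) (Finset.mem_univ i)
    rwa [ψ.2] at h
  exact (sq_le_one_iff_abs_le_one _).mp hsq

lemma norm_prod_entry_le_one (O : OG d) (z a : Fin t → Fin d) :
    ‖∏ i, ((O : Matrix (Fin d) (Fin d) ℝ) (z i) (a i) : ℂ)‖ ≤ 1 := by
  rw [norm_prod]
  refine Finset.prod_le_one (fun i _ => norm_nonneg _) (fun i _ => ?_)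
  rw [Complex.norm_real, Real.norm_eq_abs]
  exact entry_abs_le_one O _ _

lemma measurable_prod_entry (z a : Fin t → Fin d) :
    Measurable fun O : OG d => ∏ i, ((O : Matrix (Fin d) (Fin d) ℝ) (z i) (a i) : ℂ) :=
  Finset.measurable_prod _ fun i _ =>
    Complex.measurable_ofReal.comp (measurable_entry (z i) (a i))

lemma measurable_conj_entry (A : Matrix (Fin t → Fin d) (Fin t → Fin d) ℂ)
    (x y : Fin t → Fin d) :
    Measurable fun O : OG d =>
      (kronPow d t (O : Matrix (Fin d) (Fin d) ℝ) * A *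
        kronPow d t ((O : Matrix (Fin d) (Fin d) ℝ))ᵀ) x y := by
  have : (fun O : OG d =>
      (kronPow d t (O : Matrix (Fin d) (Fin d) ℝ) * A *
        kronPow d t ((O : Matrix (Fin d) (Fin d) ℝ))ᵀ) x y)
      = fun O : OG d => ∑ a : Fin t → Fin d, ∑ b : Fin t → Fin d,
          (∏ i, ((O : Matrix (Fin d) (Fin d) ℝ) (x i) (a i) : ℂ)) * A a b *
            ∏ i, ((O : Matrix (Fin d) (Fin d) ℝ) (y i) (b i) : ℂ) := by
    funext O; exact entry_expand d t _ A x y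
  rw [this]
  exact Finset.measurable_sum _ fun a _ => Finset.measurable_sum _ fun b _ =>
    ((measurable_prod_entry x a).mul_const _).mul (measurable_prod_entry y b)

lemma norm_conj_entry_le (O : OG d) (A : Matrix (Fin t → Fin d) (Fin t → Fin d) ℂ)
    (x y : Fin t → Fin d) :
    ‖(kronPow d t (O : Matrix (Fin d) (Fin d) ℝ) * A *
        kronPow d t ((O : Matrix (Fin d) (Fin d) ℝ))ᵀ) x y‖
      ≤ ∑ a : Fin t → Fin d, ∑ b : Fin t → Fin d, ‖A a b‖ := by
  rw [entry_expand d t _ A x y]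
  refine (norm_sum_le _ _).trans (Finset.sum_le_sum fun a _ => ?_)
  refine (norm_sum_le _ _).trans (Finset.sum_le_sum fun b _ => ?_)
  rw [norm_mul, norm_mul]
  calc ‖∏ i, ((O : Matrix (Fin d) (Fin d) ℝ) (x i) (a i) : ℂ)‖ * ‖A a b‖ *
        ‖∏ i, ((O : Matrix (Fin d) (Fin d) ℝ) (y i) (b i) : ℂ)‖
      ≤ 1 * ‖A a b‖ * 1 := by
        gcongr
        · exact norm_prod_entry_le_one O x a
        · exact norm_prod_entry_le_one O y b
    _ = ‖A a b‖ := by ring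

lemma integrable_conj_entry (μ : Measure (OG d)) [IsProbabilityMeasure μ]
    (A : Matrix (Fin t → Fin d) (Fin t → Fin d) ℂ) (x y : Fin t → Fin d) :
    Integrable (fun O : OG d =>
      (kronPow d t (O : Matrix (Fin d) (Fin d) ℝ) * A *
        kronPow d t ((O : Matrix (Fin d) (Fin d) ℝ))ᵀ) x y) μ := by
  refine Integrable.mono' (integrable_const (∑ a : Fin t → Fin d, ∑ b : Fin t → Fin d, ‖A a b‖))
    (measurable_conj_entry A x y).stronglyMeasurable.aestronglyMeasurable ?_
  exact Filter.Eventually.of_forall fun O => norm_conj_entry_le O A x y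

lemma twirl_sub (μ : Measure (OG d)) [IsProbabilityMeasure μ]
    (A B : Matrix (Fin t → Fin d) (Fin t → Fin d) ℂ) :
    twirl d t μ (A - B) = twirl d t μ A - twirl d t μ B := by
  ext x y
  show (∫ O : OG d, (kronPow d t _ * (A - B) * kronPow d t _ᵀ) x y ∂μ) = _
  have h : ∀ O : OG d,
      (kronPow d t (O : Matrix (Fin d) (Fin d) ℝ) * (A - B) *
        kronPow d t ((O : Matrix (Fin d) (Fin d) ℝ))ᵀ) x y
      = (kronPow d t (O : Matrix (Fin d) (Fin d) ℝ) * A *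
          kronPow d t ((O : Matrix (Fin d) (Fin d) ℝ))ᵀ) x y
        - (kronPow d t (O : Matrix (Fin d) (Fin d) ℝ) * B *
            kronPow d t ((O : Matrix (Fin d) (Fin d) ℝ))ᵀ) x y := by
    intro O
    rw [Matrix.mul_sub, Matrix.sub_mul]
    rfl
  rw [show (fun O : OG d => (kronPow d t (O : Matrix (Fin d) (Fin d) ℝ) * (A - B) *
      kronPow d t ((O : Matrix (Fin d) (Fin d) ℝ))ᵀ) x y) = _ from funext h,
    integral_sub (integrable_conj_entry μ A x y) (integrable_conj_entry μ B x y)]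
  rfl


lemma key1 (μ : Measure (OG d)) [IsProbabilityMeasure μ] (hμ : LInv μ) (e₀ : Fin d)
    (ψ : Fin d → ℝ) (hψ : ∑ i, ψ i ^ 2 = 1) (x y : Fin t → Fin d) :
    ∫ O : OG d, (∏ i, (((O : Matrix (Fin d) (Fin d) ℝ) *ᵥ ψ) (x i) : ℂ)) *
        ∏ i, (((O : Matrix (Fin d) (Fin d) ℝ) *ᵥ ψ) (y i) : ℂ) ∂μ
      = rhoR d t e₀ μ x y := by
  obtain ⟨O₀, hcol⟩ := exists_orthogonal_col e₀ ψ hψ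
  set g : OG d → ℂ := fun P => (∏ i, ((P : Matrix (Fin d) (Fin d) ℝ) (x i) e₀ : ℂ)) *
    ∏ i, ((P : Matrix (Fin d) (Fin d) ℝ) (y i) e₀ : ℂ) with hgdef
  have hg : Measurable g :=
    (measurable_prod_entry x (fun _ => e₀)).mul (measurable_prod_entry y (fun _ => e₀))
  have hv : ∀ (O : OG d) (j : Fin d),
      ((O : Matrix (Fin d) (Fin d) ℝ) *ᵥ ψ) j
        = (((O * O₀ : OG d) : Matrix (Fin d) (Fin d) ℝ)) j e₀ := by
    intro O j
    simp [Matrix.mulVec, dotProduct, Matrix.mul_apply, hcol]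
  have hfun : (fun O : OG d => (∏ i, (((O : Matrix (Fin d) (Fin d) ℝ) *ᵥ ψ) (x i) : ℂ)) *
      ∏ i, (((O : Matrix (Fin d) (Fin d) ℝ) *ᵥ ψ) (y i) : ℂ)) = fun O => g (O * O₀) := by
    funext O
    simp only [hgdef]
    congr 1
    · exact Finset.prod_congr rfl fun i _ => by rw [hv O (x i)]
    · exact Finset.prod_congr rfl fun i _ => by rw [hv O (y i)]
  rw [hfun, integral_mul_right μ hμ hg O₀]
  rfl

lemma part1 (μ : Measure (OG d)) [IsProbabilityMeasure μ] (hμ : LInv μ) (e₀ : Fin d)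
    (ψ : Fin d → ℝ) (hψ : ∑ i, ψ i ^ 2 = 1) :
    twirl d t μ
        ((Matrix.of fun x y => (∏ i, (ψ (x i) : ℂ)) * ∏ i, (ψ (y i) : ℂ)) : Matrix (Fin t → Fin d) (Fin t → Fin d) ℂ)
      = rhoR d t e₀ μ := by
  ext x y
  show (∫ O : OG d, (kronPow d t (O : Matrix (Fin d) (Fin d) ℝ) *
      ((Matrix.of fun x y => (∏ i, (ψ (x i) : ℂ)) * ∏ i, (ψ (y i) : ℂ)) : Matrix (Fin t → Fin d) (Fin t → Fin d) ℂ) *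
        kronPow d t ((O : Matrix (Fin d) (Fin d) ℝ))ᵀ) x y ∂μ) = rhoR d t e₀ μ x y
  have h : ∀ O : OG d,
      (kronPow d t (O : Matrix (Fin d) (Fin d) ℝ) *
        ((Matrix.of fun x y => (∏ i, (ψ (x i) : ℂ)) * ∏ i, (ψ (y i) : ℂ)) : Matrix (Fin t → Fin d) (Fin t → Fin d) ℂ) *
          kronPow d t ((O : Matrix (Fin d) (Fin d) ℝ))ᵀ) x y
        = (∏ i, (((O : Matrix (Fin d) (Fin d) ℝ) *ᵥ ψ) (x i) : ℂ)) *
            ∏ i, (((O : Matrix (Fin d) (Fin d) ℝ) *ᵥ ψ) (y i) : ℂ) := by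
    intro O
    rw [entry_expand, ← rank1_expand]
    rfl
  rw [show (fun O : OG d => (kronPow d t (O : Matrix (Fin d) (Fin d) ℝ) *
      ((Matrix.of fun x y => (∏ i, (ψ (x i) : ℂ)) * ∏ i, (ψ (y i) : ℂ)) : Matrix (Fin t → Fin d) (Fin t → Fin d) ℂ) *
        kronPow d t ((O : Matrix (Fin d) (Fin d) ℝ))ᵀ) x y) = _ from funext h]
  exact key1 μ hμ e₀ ψ hψ x y

lemma measurable_sph_prod (a : Fin t → Fin d) :
    Measurable fun ψ : Sph d => ∏ i, ((ψ : Fin d → ℝ) (a i) : ℂ) :=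
  Finset.measurable_prod _ fun i _ =>
    Complex.measurable_ofReal.comp ((measurable_pi_apply (a i)).comp measurable_subtype_coe)

lemma norm_sph_prod_le_one (ψ : Sph d) (a : Fin t → Fin d) :
    ‖∏ i, ((ψ : Fin d → ℝ) (a i) : ℂ)‖ ≤ 1 := by
  rw [norm_prod]
  refine Finset.prod_le_one (fun i _ => norm_nonneg _) (fun i _ => ?_)
  rw [Complex.norm_real, Real.norm_eq_abs]
  exact sph_abs_le_one ψ (a i)

lemma mulVec_abs_le (O : OG d) (ψ : Sph d) (j : Fin d) :
    |((O : Matrix (Fin d) (Fin d) ℝ) *ᵥ (ψ : Fin d → ℝ)) j| ≤ d := by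
  have : ((O : Matrix (Fin d) (Fin d) ℝ) *ᵥ (ψ : Fin d → ℝ)) j
      = ∑ k, (O : Matrix (Fin d) (Fin d) ℝ) j k * (ψ : Fin d → ℝ) k := rfl
  rw [this]
  calc |∑ k, (O : Matrix (Fin d) (Fin d) ℝ) j k * (ψ : Fin d → ℝ) k|
      ≤ ∑ k, |(O : Matrix (Fin d) (Fin d) ℝ) j k * (ψ : Fin d → ℝ) k| :=
        Finset.abs_sum_le_sum_abs _ _
    _ ≤ ∑ _k : Fin d, 1 := by
        refine Finset.sum_le_sum fun k _ => ?_
        rw [abs_mul]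
        exact mul_le_one₀ (entry_abs_le_one O j k) (abs_nonneg _) (sph_abs_le_one ψ k)
    _ = d := by simp

lemma part2 (μ : Measure (OG d)) [IsProbabilityMeasure μ] (hμ : LInv μ) (e₀ : Fin d)
    (ν : Measure (Sph d)) [IsProbabilityMeasure ν] :
    twirl d t μ (rhoS d t ν) = rhoR d t e₀ μ := by
  ext x y
  show (∫ O : OG d, (kronPow d t (O : Matrix (Fin d) (Fin d) ℝ) * rhoS d t ν *
      kronPow d t ((O : Matrix (Fin d) (Fin d) ℝ))ᵀ) x y ∂μ) = rhoR d t e₀ μ x y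
  -- Step A: rewrite the inner entry as a ν-integral
  have stepA : ∀ O : OG d,
      (kronPow d t (O : Matrix (Fin d) (Fin d) ℝ) * rhoS d t ν *
        kronPow d t ((O : Matrix (Fin d) (Fin d) ℝ))ᵀ) x y
      = ∫ ψ : Sph d, (∏ i, (((O : Matrix (Fin d) (Fin d) ℝ) *ᵥ (ψ : Fin d → ℝ)) (x i) : ℂ)) *
          ∏ i, (((O : Matrix (Fin d) (Fin d) ℝ) *ᵥ (ψ : Fin d → ℝ)) (y i) : ℂ) ∂ν := by
    intro O
    rw [entry_expand]
    have hterm : ∀ a b : Fin t → Fin d,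
        (∏ i, ((O : Matrix (Fin d) (Fin d) ℝ) (x i) (a i) : ℂ)) * rhoS d t ν a b *
          ∏ i, ((O : Matrix (Fin d) (Fin d) ℝ) (y i) (b i) : ℂ)
        = ∫ ψ : Sph d, (∏ i, ((O : Matrix (Fin d) (Fin d) ℝ) (x i) (a i) : ℂ)) *
            ((∏ i, ((ψ : Fin d → ℝ) (a i) : ℂ)) * ∏ i, ((ψ : Fin d → ℝ) (b i) : ℂ)) *
            ∏ i, ((O : Matrix (Fin d) (Fin d) ℝ) (y i) (b i) : ℂ) ∂ν := by
      intro a b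
      rw [show rhoS d t ν a b = ∫ ψ : Sph d, (∏ i, ((ψ : Fin d → ℝ) (a i) : ℂ)) *
          ∏ i, ((ψ : Fin d → ℝ) (b i) : ℂ) ∂ν from rfl]
      rw [← MeasureTheory.integral_const_mul, ← MeasureTheory.integral_mul_const]
    simp only [hterm]
    have hint : ∀ a b : Fin t → Fin d, Integrable (fun ψ : Sph d =>
        (∏ i, ((O : Matrix (Fin d) (Fin d) ℝ) (x i) (a i) : ℂ)) *
          ((∏ i, ((ψ : Fin d → ℝ) (a i) : ℂ)) * ∏ i, ((ψ : Fin d → ℝ) (b i) : ℂ)) *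
          ∏ i, ((O : Matrix (Fin d) (Fin d) ℝ) (y i) (b i) : ℂ)) ν := by
      intro a b
      refine Integrable.mono' (integrable_const
        (‖∏ i, ((O : Matrix (Fin d) (Fin d) ℝ) (x i) (a i) : ℂ)‖ *
          ‖∏ i, ((O : Matrix (Fin d) (Fin d) ℝ) (y i) (b i) : ℂ)‖))
        ((((measurable_sph_prod a).mul (measurable_sph_prod b)).const_mul _).mul_const
          _).stronglyMeasurable.aestronglyMeasurable
        (Filter.Eventually.of_forall fun ψ => ?_)
      rw [norm_mul, norm_mul, norm_mul]
      calc ‖∏ i, ((O : Matrix (Fin d) (Fin d) ℝ) (x i) (a i) : ℂ)‖ *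
            (‖∏ i, ((ψ : Fin d → ℝ) (a i) : ℂ)‖ * ‖∏ i, ((ψ : Fin d → ℝ) (b i) : ℂ)‖) *
            ‖∏ i, ((O : Matrix (Fin d) (Fin d) ℝ) (y i) (b i) : ℂ)‖
          ≤ ‖∏ i, ((O : Matrix (Fin d) (Fin d) ℝ) (x i) (a i) : ℂ)‖ * (1 * 1) *
            ‖∏ i, ((O : Matrix (Fin d) (Fin d) ℝ) (y i) (b i) : ℂ)‖ := by
            gcongr
            · exact norm_sph_prod_le_one ψ a
            · exact norm_sph_prod_le_one ψ b
        _ = _ := by ring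
    calc ∑ a : Fin t → Fin d, ∑ b : Fin t → Fin d, ∫ ψ : Sph d,
          (∏ i, ((O : Matrix (Fin d) (Fin d) ℝ) (x i) (a i) : ℂ)) *
            ((∏ i, ((ψ : Fin d → ℝ) (a i) : ℂ)) * ∏ i, ((ψ : Fin d → ℝ) (b i) : ℂ)) *
            ∏ i, ((O : Matrix (Fin d) (Fin d) ℝ) (y i) (b i) : ℂ) ∂ν
        = ∑ a : Fin t → Fin d, ∫ ψ : Sph d, ∑ b : Fin t → Fin d,
            (∏ i, ((O : Matrix (Fin d) (Fin d) ℝ) (x i) (a i) : ℂ)) *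
              ((∏ i, ((ψ : Fin d → ℝ) (a i) : ℂ)) * ∏ i, ((ψ : Fin d → ℝ) (b i) : ℂ)) *
              ∏ i, ((O : Matrix (Fin d) (Fin d) ℝ) (y i) (b i) : ℂ) ∂ν :=
          Finset.sum_congr rfl fun a _ =>
            (integral_finset_sum _ (fun b _ => hint a b)).symm
      _ = ∫ ψ : Sph d, ∑ a : Fin t → Fin d, ∑ b : Fin t → Fin d,
            (∏ i, ((O : Matrix (Fin d) (Fin d) ℝ) (x i) (a i) : ℂ)) *
              ((∏ i, ((ψ : Fin d → ℝ) (a i) : ℂ)) * ∏ i, ((ψ : Fin d → ℝ) (b i) : ℂ)) *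
              ∏ i, ((O : Matrix (Fin d) (Fin d) ℝ) (y i) (b i) : ℂ) ∂ν :=
          (integral_finset_sum _ (fun a _ =>
            integrable_finset_sum _ (fun b _ => hint a b))).symm
      _ = _ := by
          refine integral_congr_ae (Filter.Eventually.of_forall fun ψ => ?_)
          exact rank1_expand (O : Matrix (Fin d) (Fin d) ℝ) (ψ : Fin d → ℝ) x y
  -- Step B: Fubini
  have hmeasP : Measurable (Function.uncurry fun (O : OG d) (ψ : Sph d) =>
      (∏ i, (((O : Matrix (Fin d) (Fin d) ℝ) *ᵥ (ψ : Fin d → ℝ)) (x i) : ℂ)) *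
        ∏ i, (((O : Matrix (Fin d) (Fin d) ℝ) *ᵥ (ψ : Fin d → ℝ)) (y i) : ℂ)) := by
    have hcoord : ∀ j : Fin d, Measurable fun p : OG d × Sph d =>
        ((p.1 : Matrix (Fin d) (Fin d) ℝ) *ᵥ (p.2 : Fin d → ℝ)) j := by
      intro j
      have : (fun p : OG d × Sph d =>
          ((p.1 : Matrix (Fin d) (Fin d) ℝ) *ᵥ (p.2 : Fin d → ℝ)) j)
          = fun p : OG d × Sph d => ∑ k, (p.1 : Matrix (Fin d) (Fin d) ℝ) j k *
            (p.2 : Fin d → ℝ) k := rfl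
      rw [this]
      exact Finset.measurable_sum _ fun k _ =>
        ((measurable_entry j k).comp measurable_fst).mul
          (((measurable_pi_apply k).comp measurable_subtype_coe).comp measurable_snd)
    exact ((Finset.measurable_prod _ fun i _ =>
        Complex.measurable_ofReal.comp (hcoord (x i))).mul
      (Finset.measurable_prod _ fun i _ =>
        Complex.measurable_ofReal.comp (hcoord (y i))))
  have hintP : Integrable (Function.uncurry fun (O : OG d) (ψ : Sph d) =>
      (∏ i, (((O : Matrix (Fin d) (Fin d) ℝ) *ᵥ (ψ : Fin d → ℝ)) (x i) : ℂ)) *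
        ∏ i, (((O : Matrix (Fin d) (Fin d) ℝ) *ᵥ (ψ : Fin d → ℝ)) (y i) : ℂ)) (μ.prod ν) := by
    refine Integrable.mono' (integrable_const ((d : ℝ) ^ t * (d : ℝ) ^ t))
      hmeasP.stronglyMeasurable.aestronglyMeasurable
      (Filter.Eventually.of_forall fun p => ?_)
    rw [Function.uncurry, norm_mul]
    have hb : ∀ z : Fin t → Fin d,
        ‖∏ i, (((p.1 : Matrix (Fin d) (Fin d) ℝ) *ᵥ (p.2 : Fin d → ℝ)) (z i) : ℂ)‖
          ≤ (d : ℝ) ^ t := by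
      intro z
      rw [norm_prod]
      calc ∏ i, ‖((((p.1 : Matrix (Fin d) (Fin d) ℝ) *ᵥ (p.2 : Fin d → ℝ)) (z i) : ℝ) : ℂ)‖
          ≤ ∏ _i : Fin t, (d : ℝ) := by
            refine Finset.prod_le_prod (fun i _ => norm_nonneg _) (fun i _ => ?_)
            rw [Complex.norm_real, Real.norm_eq_abs]
            exact mulVec_abs_le p.1 p.2 (z i)
        _ = (d : ℝ) ^ t := by simp
    exact mul_le_mul (hb x) (hb y) (norm_nonneg _) (by positivity)
  calc (∫ O : OG d, (kronPow d t (O : Matrix (Fin d) (Fin d) ℝ) * rhoS d t ν *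
        kronPow d t ((O : Matrix (Fin d) (Fin d) ℝ))ᵀ) x y ∂μ)
      = ∫ O : OG d, ∫ ψ : Sph d,
          (∏ i, (((O : Matrix (Fin d) (Fin d) ℝ) *ᵥ (ψ : Fin d → ℝ)) (x i) : ℂ)) *
            ∏ i, (((O : Matrix (Fin d) (Fin d) ℝ) *ᵥ (ψ : Fin d → ℝ)) (y i) : ℂ) ∂ν ∂μ := by
        exact integral_congr_ae (Filter.Eventually.of_forall stepA)
    _ = ∫ ψ : Sph d, ∫ O : OG d,
          (∏ i, (((O : Matrix (Fin d) (Fin d) ℝ) *ᵥ (ψ : Fin d → ℝ)) (x i) : ℂ)) *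
            ∏ i, (((O : Matrix (Fin d) (Fin d) ℝ) *ᵥ (ψ : Fin d → ℝ)) (y i) : ℂ) ∂μ ∂ν :=
        integral_integral_swap hintP
    _ = ∫ _ψ : Sph d, rhoR d t e₀ μ x y ∂ν := by
        refine integral_congr_ae (Filter.Eventually.of_forall fun ψ => ?_)
        exact key1 μ hμ e₀ (ψ : Fin d → ℝ) ψ.2 x y
    _ = rhoR d t e₀ μ x y := by simp

end TwirlAux

/-- Let `μ` be the Haar probability measure on `O(d)` (probability + left invariance).
(i) The twirl of `(|ψ⟩⟨ψ|)^{⊗t}` is `ρ_R` for every real unit vector `ψ`;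
(ii) the twirl of any mixture `ρ_S` of `t`-fold powers of real states is `ρ_R`;
(iii) consequently, for any functional `N` contractive under the twirl (e.g. any
Schatten `p`-norm), since the twirl fixes the complex Haar average `ρ_C`,
`N(ρ_S − ρ_C) ≥ N(ρ_R − ρ_C)`. -/
theorem twirling_lower_bound (d t : ℕ) (hd : 2 ≤ d) (ht : 1 ≤ t)
    (μ : Measure ↥(Matrix.orthogonalGroup (Fin d) ℝ)) [IsProbabilityMeasure μ]
    (hμ : ∀ O : ↥(Matrix.orthogonalGroup (Fin d) ℝ),
      μ.map (fun P => O * P) = μ)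
    (ν : Measure {ψ : Fin d → ℝ // ∑ i, ψ i ^ 2 = 1}) [IsProbabilityMeasure ν]
    (ρC : Matrix (Fin t → Fin d) (Fin t → Fin d) ℂ)
    (hC : twirl d t μ ρC = ρC) :
    (∀ ψ : Fin d → ℝ, (∑ i, ψ i ^ 2 = 1) →
      twirl d t μ
          (Matrix.of fun x y => (∏ i, (ψ (x i) : ℂ)) * ∏ i, (ψ (y i) : ℂ)) =
        rhoR d t ⟨0, by omega⟩ μ) ∧
    (twirl d t μ (rhoS d t ν) = rhoR d t ⟨0, by omega⟩ μ) ∧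
    (∀ N : Matrix (Fin t → Fin d) (Fin t → Fin d) ℂ → ℝ,
      (∀ A, N (twirl d t μ A) ≤ N A) →
      N (rhoR d t ⟨0, by omega⟩ μ - ρC) ≤ N (rhoS d t ν - ρC)) := by
  have hμ' : TwirlAux.LInv μ := hμ
  refine ⟨fun ψ hψ => TwirlAux.part1 μ hμ' _ ψ hψ, TwirlAux.part2 μ hμ' _ ν, ?_⟩
  intro N hN
  have hkey : rhoR d t ⟨0, by omega⟩ μ - ρC = twirl d t μ (rhoS d t ν - ρC) := by
    rw [TwirlAux.twirl_sub μ, TwirlAux.part2 μ hμ' _ ν, hC]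
  rw [hkey]
  exact hN _
end

section
/- Let d ≥ 2 and 1 ≤ t ≤ d. Define the equivalence relation ∼ on [d]^t by x ∼ y iff every element of [d] appears an even number of times in the concatenation of x and y. Then: (i) the equivalence classes of ∼ are in bijection with subsets S ⊆ [d] with |S| ≤ t and |S| ≡ t (mod 2), where S is the set of elements appearing an odd number of times in a representative; (ii) the number of equivalence classes equals ∑_{k=0}^{⌊t/2⌋} C(d, t−2k); (iii) the smallest equivalence class has size t!, attained by classes with |S| = t. -/
/-- The set of elements of `[d]` appearing an odd number of times in the tuple `x`. -/
def oddSet (d t : ℕ) (x : Fin t → Fin d) : Finset (Fin d) :=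
  Finset.univ.filter fun i => (Finset.univ.filter fun j => x j = i).card % 2 = 1

/-- The relation `x ∼ y`: every element of `[d]` appears an even number of times in the
concatenation of `x` and `y`. -/
def evenRel (d t : ℕ) (x y : Fin t → Fin d) : Prop :=
  ∀ i : Fin d,
    ((Finset.univ.filter fun j => x j = i).card +
      (Finset.univ.filter fun j => y j = i).card) % 2 = 0

instance (d t : ℕ) : DecidableRel (evenRel d t) := fun _ _ => by
  unfold evenRel; infer_instance

open Finset

def cnt (d t : ℕ) (x : Fin t → Fin d) (i : Fin d) : ℕ :=
  (Finset.univ.filter fun j => x j = i).card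

lemma mem_oddSet {d t : ℕ} {x : Fin t → Fin d} {i : Fin d} :
    i ∈ oddSet d t x ↔ cnt d t x i % 2 = 1 := by
  simp [oddSet, cnt]

lemma sum_cnt (d t : ℕ) (x : Fin t → Fin d) : ∑ i, cnt d t x i = t := by
  have := Finset.card_eq_sum_card_fiberwise (f := x) (s := univ) (t := univ)
    (fun a _ => mem_univ _)
  simpa [cnt] using this.symm

lemma evenRel_iff {d t : ℕ} (x y : Fin t → Fin d) :
    evenRel d t x y ↔ oddSet d t x = oddSet d t y := by
  constructor
  · intro h
    ext i
    have := h i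
    simp only [mem_oddSet, cnt] at *
    omega
  · intro h i
    have h1 : i ∈ oddSet d t x ↔ i ∈ oddSet d t y := by rw [h]
    simp only [mem_oddSet, cnt] at h1
    omega

lemma oddSet_card_le (d t : ℕ) (x : Fin t → Fin d) : (oddSet d t x).card ≤ t := by
  calc (oddSet d t x).card = ∑ i ∈ oddSet d t x, 1 := by simp
  _ ≤ ∑ i ∈ oddSet d t x, cnt d t x i := by
      apply Finset.sum_le_sum
      intro i hi
      rw [mem_oddSet] at hi
      omega
  _ ≤ ∑ i, cnt d t x i := Finset.sum_le_sum_of_subset (Finset.subset_univ _)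
  _ = t := sum_cnt d t x

lemma oddSet_card_mod (d t : ℕ) (x : Fin t → Fin d) :
    (oddSet d t x).card % 2 = t % 2 := by
  have h1 : t % 2 = (∑ i, cnt d t x i) % 2 := by rw [sum_cnt]
  rw [h1, Finset.sum_nat_mod]
  have h2 : ∑ i, cnt d t x i % 2 = ∑ i ∈ oddSet d t x, cnt d t x i % 2 := by
    refine (Finset.sum_subset (Finset.subset_univ _) ?_).symm
    intro i _ hi
    rw [mem_oddSet] at hi
    omega
  rw [h2]
  have h3 : ∑ i ∈ oddSet d t x, cnt d t x i % 2 = ∑ i ∈ oddSet d t x, 1 := by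
    apply Finset.sum_congr rfl
    intro i hi
    rw [mem_oddSet] at hi
    omega
  rw [h3]
  simp

namespace KeyConstr

variable (d t : ℕ) (S T : Finset (Fin d))

def pA (hd : 0 < d) (n : ℕ) : Fin d :=
  if h : n < S.card then S.orderEmbOfFin rfl ⟨n, h⟩ else ⟨0, hd⟩

def pE (hd : 0 < d) (hT : T.card = t - S.card) (n : ℕ) : Fin d :=
  if h : n < t - S.card then T.orderEmbOfFin hT ⟨n, h⟩ else ⟨0, hd⟩

def pos (ht : 0 < t) (n : ℕ) : Fin t := if h : n < t then ⟨n, h⟩ else ⟨0, ht⟩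

def bitf (ht : 0 < t) (σ : Equiv.Perm (Fin t)) (j : ℕ) : ℕ :=
  if σ (pos t ht (S.card + 2*j)) < σ (pos t ht (S.card + 2*j + 1)) then 0 else 1

variable (hd : 0 < d) (ht : 0 < t) (hT : T.card = t - S.card)

def val (σ : Equiv.Perm (Fin t)) (k : Fin t) : Fin d :=
  if (k : ℕ) < S.card then pA d S hd k
  else pE d t S T hd hT
    (2 * (((k : ℕ) - S.card) / 2) + bitf d t S ht σ (((k : ℕ) - S.card) / 2))

def Phi (σ : Equiv.Perm (Fin t)) : Fin t → Fin d :=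
  fun i => val d t S T hd ht hT σ (σ⁻¹ i)

-- basic lemmas
lemma pos_val {n : ℕ} (hn : n < t) : (pos t ht n : ℕ) = n := by simp [pos, hn]

lemma pA_mem {n : ℕ} (hn : n < S.card) : pA d S hd n ∈ S := by
  simp only [pA, dif_pos hn]; exact Finset.orderEmbOfFin_mem _ _ _

lemma pA_inj {n n' : ℕ} (hn : n < S.card) (hn' : n' < S.card)
    (h : pA d S hd n = pA d S hd n') : n = n' := by
  simp only [pA, dif_pos hn, dif_pos hn'] at h
  have := (S.orderEmbOfFin (k := S.card) rfl).injective h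
  simpa using this

lemma pA_surj {v : Fin d} (hv : v ∈ S) : ∃ n, ∃ _ : n < S.card, pA d S hd n = v := by
  have : v ∈ Set.range (S.orderEmbOfFin (k := S.card) rfl) := by
    rw [Finset.range_orderEmbOfFin]; exact hv
  obtain ⟨⟨n, hn⟩, h⟩ := this
  exact ⟨n, hn, by simp [pA, dif_pos hn, h]⟩

lemma pE_notmem (hsub : T ⊆ Sᶜ) {n : ℕ} (hn : n < t - S.card) : pE d t S T hd hT n ∉ S := by
  simp only [pE, dif_pos hn]
  have := hsub (Finset.orderEmbOfFin_mem T hT ⟨n, hn⟩)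
  simpa using this

lemma pE_inj {n n' : ℕ} (hn : n < t - S.card) (hn' : n' < t - S.card)
    (h : pE d t S T hd hT n = pE d t S T hd hT n') : n = n' := by
  simp only [pE, dif_pos hn, dif_pos hn'] at h
  have := (T.orderEmbOfFin hT).injective h
  simpa using this



def Fv (σ : Equiv.Perm (Fin t)) (v : Fin d) : Finset (Fin t) :=
  univ.filter fun k => val d t S T hd ht hT σ k = v

lemma bitf_le (σ : Equiv.Perm (Fin t)) (j : ℕ) : bitf d t S ht σ j ≤ 1 := by
  unfold bitf; split <;> omega

lemma arith (hst : S.card ≤ t) (hpar : S.card % 2 = t % 2) {k : ℕ}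
    (hk1 : S.card ≤ k) (hk2 : k < t) :
    2 * ((k - S.card) / 2) + 1 < t - S.card := by omega

lemma fib_lt (σ : Equiv.Perm (Fin t)) (hst : S.card ≤ t) (hpar : S.card % 2 = t % 2)
    (hsub : T ⊆ Sᶜ) (k : Fin t) (hk : (k : ℕ) < S.card) :
    Fv d t S T hd ht hT σ (val d t S T hd ht hT σ k) = {k} := by
  have hvS : val d t S T hd ht hT σ k ∈ S := by
    simp only [val, if_pos hk]; exact pA_mem d S hd hk
  ext k'
  simp only [Fv, mem_filter, mem_univ, true_and, mem_singleton]
  constructor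
  · intro h
    by_cases hk' : (k' : ℕ) < S.card
    · have h2 : pA d S hd (k' : ℕ) = pA d S hd (k : ℕ) := by
        simpa [val, if_pos hk', if_pos hk] using h
      exact Fin.ext (pA_inj d S hd hk' hk h2)
    · exfalso
      push_neg at hk'
      have hb := bitf_le d t S ht σ (((k' : ℕ) - S.card) / 2)
      have ha := arith d t S hst hpar hk' k'.isLt
      have hnot : val d t S T hd ht hT σ k' ∉ S := by
        simp only [val, if_neg (not_lt.mpr hk')]
        exact pE_notmem d t S T hd hT hsub (by omega)
      rw [h] at hnot; exact hnot hvS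
  · rintro rfl; rfl

lemma fib_ge (σ : Equiv.Perm (Fin t)) (hst : S.card ≤ t) (hpar : S.card % 2 = t % 2)
    (hsub : T ⊆ Sᶜ) (k : Fin t) (hk : S.card ≤ (k : ℕ)) :
    Fv d t S T hd ht hT σ (val d t S T hd ht hT σ k) =
      {pos t ht (S.card + 2 * (((k : ℕ) - S.card) / 2)),
       pos t ht (S.card + 2 * (((k : ℕ) - S.card) / 2) + 1)} := by
  have hjb : 2 * (((k : ℕ) - S.card) / 2) + 1 < t - S.card :=
    arith d t S hst hpar hk k.isLt
  have hb := bitf_le d t S ht σ (((k : ℕ) - S.card) / 2)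
  have hvval : val d t S T hd ht hT σ k =
      pE d t S T hd hT (2 * (((k : ℕ) - S.card) / 2) +
        bitf d t S ht σ (((k : ℕ) - S.card) / 2)) := by
    simp [val, not_lt.mpr hk]
  have hvnS : val d t S T hd ht hT σ k ∉ S := by
    rw [hvval]; exact pE_notmem d t S T hd hT hsub (by omega)
  have hp0v : (pos t ht (S.card + 2 * (((k : ℕ) - S.card) / 2)) : ℕ) =
      S.card + 2 * (((k : ℕ) - S.card) / 2) := pos_val t ht (by omega)
  have hp1v : (pos t ht (S.card + 2 * (((k : ℕ) - S.card) / 2) + 1) : ℕ) =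
      S.card + 2 * (((k : ℕ) - S.card) / 2) + 1 := pos_val t ht (by omega)
  ext k'
  simp only [Fv, mem_filter, mem_univ, true_and, mem_insert, mem_singleton]
  constructor
  · intro h
    by_cases hk' : (k' : ℕ) < S.card
    · exfalso
      have : val d t S T hd ht hT σ k' ∈ S := by
        simp only [val, if_pos hk']; exact pA_mem d S hd hk'
      rw [h] at this; exact hvnS this
    · push_neg at hk'
      have hj'b : 2 * (((k' : ℕ) - S.card) / 2) + 1 < t - S.card :=
        arith d t S hst hpar hk' k'.isLt
      have hb' := bitf_le d t S ht σ (((k' : ℕ) - S.card) / 2)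
      have h2 : pE d t S T hd hT (2 * (((k' : ℕ) - S.card) / 2) +
          bitf d t S ht σ (((k' : ℕ) - S.card) / 2)) =
          pE d t S T hd hT (2 * (((k : ℕ) - S.card) / 2) +
          bitf d t S ht σ (((k : ℕ) - S.card) / 2)) := by
        rw [← hvval, ← h]; simp [val, not_lt.mpr hk']
      have h3 := pE_inj d t S T hd hT (by omega) (by omega) h2
      have hcases : (k' : ℕ) = S.card + 2 * (((k : ℕ) - S.card) / 2) ∨
          (k' : ℕ) = S.card + 2 * (((k : ℕ) - S.card) / 2) + 1 := by omega
      rcases hcases with hc | hc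
      · left; exact Fin.ext (by rw [hp0v, hc])
      · right; exact Fin.ext (by rw [hp1v, hc])
  · intro h
    rcases h with rfl | rfl
    · rw [hvval]
      simp only [val, hp0v, if_neg (by omega : ¬ S.card + 2 * (((k : ℕ) - S.card) / 2) < S.card)]
      have e : (S.card + 2 * (((k : ℕ) - S.card) / 2) - S.card) / 2 = ((k : ℕ) - S.card) / 2 := by
        omega
      rw [e]
    · rw [hvval]
      simp only [val, hp1v, if_neg (by omega : ¬ S.card + 2 * (((k : ℕ) - S.card) / 2) + 1 < S.card)]
      have e : (S.card + 2 * (((k : ℕ) - S.card) / 2) + 1 - S.card) / 2 = ((k : ℕ) - S.card) / 2 := by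
        omega
      rw [e]



lemma filt_eq (σ : Equiv.Perm (Fin t)) (v : Fin d) :
    (univ.filter fun i => Phi d t S T hd ht hT σ i = v) =
      (Fv d t S T hd ht hT σ v).image σ := by
  ext i
  simp only [mem_filter, mem_univ, true_and, mem_image, Fv, Phi]
  constructor
  · intro h
    exact ⟨σ⁻¹ i, by simpa using (Finset.mem_filter.mp h).2, by simp⟩
  · rintro ⟨k, hk, rfl⟩
    exact Finset.mem_filter.mpr ⟨mem_univ _, by simpa using hk⟩

lemma cnt_Phi (σ : Equiv.Perm (Fin t)) (v : Fin d) :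
    cnt d t (Phi d t S T hd ht hT σ) v = (Fv d t S T hd ht hT σ v).card := by
  rw [cnt, filt_eq, Finset.card_image_of_injective _ σ.injective]

lemma pair_ne {a b : ℕ} (ha : a < t) (hb : b < t) (hab : a ≠ b) :
    pos t ht a ≠ pos t ht b := by
  intro e
  have := congrArg Fin.val e
  rw [pos_val t ht ha, pos_val t ht hb] at this
  exact hab this

lemma oddSet_Phi (hst : S.card ≤ t) (hpar : S.card % 2 = t % 2) (hsub : T ⊆ Sᶜ)
    (σ : Equiv.Perm (Fin t)) : oddSet d t (Phi d t S T hd ht hT σ) = S := by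
  ext v
  rw [mem_oddSet, cnt_Phi]
  by_cases hv : v ∈ S
  · obtain ⟨n, hn, hpAn⟩ := pA_surj d S hd hv
    have hkv : (pos t ht n : ℕ) = n := pos_val t ht (lt_of_lt_of_le hn hst)
    have hval : val d t S T hd ht hT σ (pos t ht n) = v := by
      simp only [val, hkv, if_pos hn]; exact hpAn
    rw [← hval, fib_lt d t S T hd ht hT σ hst hpar hsub _ (by rw [hkv]; exact hn)]
    simp [hval, hv]
  · simp only [hv, iff_false]
    intro hodd
    have hne : (Fv d t S T hd ht hT σ v).Nonempty := by
      rw [← Finset.card_pos]; omega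
    obtain ⟨k, hk⟩ := hne
    have hkval : val d t S T hd ht hT σ k = v := (mem_filter.mp hk).2
    have hks : S.card ≤ (k : ℕ) := by
      by_contra hc
      push_neg at hc
      apply hv
      rw [← hkval]
      simp only [val, if_pos hc]
      exact pA_mem d S hd hc
    rw [← hkval, fib_ge d t S T hd ht hT σ hst hpar hsub k hks] at hodd
    have hjb : 2 * (((k : ℕ) - S.card) / 2) + 1 < t - S.card :=
      arith d t S hst hpar hks k.isLt
    rw [Finset.card_pair (pair_ne t ht (by omega) (by omega) (by omega))] at hodd
    omega

lemma Phi_inj (hst : S.card ≤ t) (hpar : S.card % 2 = t % 2) (hsub : T ⊆ Sᶜ) :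
    Function.Injective (Phi d t S T hd ht hT) := by
  intro σ τ h
  have hFv : ∀ v, (Fv d t S T hd ht hT σ v).image σ = (Fv d t S T hd ht hT τ v).image τ := by
    intro v
    rw [← filt_eq, ← filt_eq, h]
  apply Equiv.ext
  intro k
  by_cases hk : (k : ℕ) < S.card
  · have h1 : val d t S T hd ht hT σ k = val d t S T hd ht hT τ k := by simp [val, hk]
    have h2 := hFv (val d t S T hd ht hT σ k)
    rw [fib_lt d t S T hd ht hT σ hst hpar hsub k hk, h1,
      fib_lt d t S T hd ht hT τ hst hpar hsub k hk] at h2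
    simpa using h2
  · push_neg at hk
    have hjb : 2 * (((k : ℕ) - S.card) / 2) + 1 < t - S.card :=
      arith d t S hst hpar hk k.isLt
    have hb := bitf_le d t S ht σ (((k : ℕ) - S.card) / 2)
    have hb' := bitf_le d t S ht τ (((k : ℕ) - S.card) / 2)
    have hp0v : (pos t ht (S.card + 2 * (((k : ℕ) - S.card) / 2)) : ℕ) =
        S.card + 2 * (((k : ℕ) - S.card) / 2) := pos_val t ht (by omega)
    have hp1v : (pos t ht (S.card + 2 * (((k : ℕ) - S.card) / 2) + 1) : ℕ) =
        S.card + 2 * (((k : ℕ) - S.card) / 2) + 1 := pos_val t ht (by omega)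
    have hp01 : pos t ht (S.card + 2 * (((k : ℕ) - S.card) / 2)) ≠
        pos t ht (S.card + 2 * (((k : ℕ) - S.card) / 2) + 1) :=
      pair_ne t ht (by omega) (by omega) (by omega)
    -- bits are equal
    have hbit : bitf d t S ht σ (((k : ℕ) - S.card) / 2) =
        bitf d t S ht τ (((k : ℕ) - S.card) / 2) := by
      by_contra hbne
      have hvk : val d t S T hd ht hT σ k =
          pE d t S T hd hT (2 * (((k : ℕ) - S.card) / 2) +
            bitf d t S ht σ (((k : ℕ) - S.card) / 2)) := by
        simp [val, not_lt.mpr hk]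
      have hem : Fv d t S T hd ht hT τ (val d t S T hd ht hT σ k) = ∅ := by
        rw [Finset.eq_empty_iff_forall_notMem]
        intro k' hk'
        have hkv' : val d t S T hd ht hT τ k' = val d t S T hd ht hT σ k :=
          (mem_filter.mp hk').2
        by_cases hc : (k' : ℕ) < S.card
        · have h5 : val d t S T hd ht hT τ k' ∈ S := by
            simp only [val, if_pos hc]; exact pA_mem d S hd hc
          rw [hkv', hvk] at h5
          exact pE_notmem d t S T hd hT hsub (by omega) h5
        · push_neg at hc
          have hj'b : 2 * (((k' : ℕ) - S.card) / 2) + 1 < t - S.card :=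
            arith d t S hst hpar hc k'.isLt
          have hb'' := bitf_le d t S ht τ (((k' : ℕ) - S.card) / 2)
          have h6 : pE d t S T hd hT (2 * (((k' : ℕ) - S.card) / 2) +
              bitf d t S ht τ (((k' : ℕ) - S.card) / 2)) =
              pE d t S T hd hT (2 * (((k : ℕ) - S.card) / 2) +
              bitf d t S ht σ (((k : ℕ) - S.card) / 2)) := by
            rw [← hvk, ← hkv']; simp [val, not_lt.mpr hc]
          have h7 := pE_inj d t S T hd hT (by omega) (by omega) h6
          have hjj : ((k' : ℕ) - S.card) / 2 = ((k : ℕ) - S.card) / 2 := by omega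
          rw [hjj] at h7
          omega
      have h8 := hFv (val d t S T hd ht hT σ k)
      rw [fib_ge d t S T hd ht hT σ hst hpar hsub k hk, hem] at h8
      simp at h8
    -- now the two fibers coincide
    have hvaleq : val d t S T hd ht hT σ k = val d t S T hd ht hT τ k := by
      simp [val, not_lt.mpr hk, hbit]
    have h2 := hFv (val d t S T hd ht hT σ k)
    rw [fib_ge d t S T hd ht hT σ hst hpar hsub k hk, hvaleq,
      fib_ge d t S T hd ht hT τ hst hpar hsub k hk,
      Finset.image_insert, Finset.image_singleton,
      Finset.image_insert, Finset.image_singleton] at h2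
    have hσne : σ (pos t ht (S.card + 2 * (((k : ℕ) - S.card) / 2))) ≠
        σ (pos t ht (S.card + 2 * (((k : ℕ) - S.card) / 2) + 1)) :=
      fun e => hp01 (σ.injective e)
    have hτne : τ (pos t ht (S.card + 2 * (((k : ℕ) - S.card) / 2))) ≠
        τ (pos t ht (S.card + 2 * (((k : ℕ) - S.card) / 2) + 1)) :=
      fun e => hp01 (τ.injective e)
    have hmem0 : σ (pos t ht (S.card + 2 * (((k : ℕ) - S.card) / 2))) =
        τ (pos t ht (S.card + 2 * (((k : ℕ) - S.card) / 2))) ∨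
        σ (pos t ht (S.card + 2 * (((k : ℕ) - S.card) / 2))) =
        τ (pos t ht (S.card + 2 * (((k : ℕ) - S.card) / 2) + 1)) := by
      have h9 : σ (pos t ht (S.card + 2 * (((k : ℕ) - S.card) / 2))) ∈
          ({τ (pos t ht (S.card + 2 * (((k : ℕ) - S.card) / 2))),
            τ (pos t ht (S.card + 2 * (((k : ℕ) - S.card) / 2) + 1))} : Finset (Fin t)) := by
        rw [← h2]; simp
      simpa using h9
    have hmem1 : σ (pos t ht (S.card + 2 * (((k : ℕ) - S.card) / 2) + 1)) =
        τ (pos t ht (S.card + 2 * (((k : ℕ) - S.card) / 2))) ∨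
        σ (pos t ht (S.card + 2 * (((k : ℕ) - S.card) / 2) + 1)) =
        τ (pos t ht (S.card + 2 * (((k : ℕ) - S.card) / 2) + 1)) := by
      have h9 : σ (pos t ht (S.card + 2 * (((k : ℕ) - S.card) / 2) + 1)) ∈
          ({τ (pos t ht (S.card + 2 * (((k : ℕ) - S.card) / 2))),
            τ (pos t ht (S.card + 2 * (((k : ℕ) - S.card) / 2) + 1))} : Finset (Fin t)) := by
        rw [← h2]; simp
      simpa using h9
    have hAB : (σ (pos t ht (S.card + 2 * (((k : ℕ) - S.card) / 2))) <
        σ (pos t ht (S.card + 2 * (((k : ℕ) - S.card) / 2) + 1))) ↔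
        (τ (pos t ht (S.card + 2 * (((k : ℕ) - S.card) / 2))) <
        τ (pos t ht (S.card + 2 * (((k : ℕ) - S.card) / 2) + 1))) := by
      unfold bitf at hbit
      by_cases hA : σ (pos t ht (S.card + 2 * (((k : ℕ) - S.card) / 2))) <
          σ (pos t ht (S.card + 2 * (((k : ℕ) - S.card) / 2) + 1)) <;>
        by_cases hB : τ (pos t ht (S.card + 2 * (((k : ℕ) - S.card) / 2))) <
          τ (pos t ht (S.card + 2 * (((k : ℕ) - S.card) / 2) + 1)) <;>
        simp [hA, hB] at hbit ⊢
    have hswapfalse : ¬ (σ (pos t ht (S.card + 2 * (((k : ℕ) - S.card) / 2))) =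
        τ (pos t ht (S.card + 2 * (((k : ℕ) - S.card) / 2) + 1)) ∧
        σ (pos t ht (S.card + 2 * (((k : ℕ) - S.card) / 2) + 1)) =
        τ (pos t ht (S.card + 2 * (((k : ℕ) - S.card) / 2)))) := by
      rintro ⟨e0, e1⟩
      rw [e0, e1] at hAB
      rcases lt_or_gt_of_ne hτne with hlt | hgt
      · exact absurd (hAB.mpr hlt) (lt_asymm hlt)
      · exact absurd (hAB.mp hgt) (lt_asymm hgt)
    have hfinal : σ (pos t ht (S.card + 2 * (((k : ℕ) - S.card) / 2))) =
        τ (pos t ht (S.card + 2 * (((k : ℕ) - S.card) / 2))) ∧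
        σ (pos t ht (S.card + 2 * (((k : ℕ) - S.card) / 2) + 1)) =
        τ (pos t ht (S.card + 2 * (((k : ℕ) - S.card) / 2) + 1)) := by
      rcases hmem0 with e0 | e0
      · refine ⟨e0, ?_⟩
        rcases hmem1 with e1 | e1
        · exact absurd (e1.trans e0.symm) hσne.symm
        · exact e1
      · rcases hmem1 with e1 | e1
        · exact absurd ⟨e0, e1⟩ hswapfalse
        · exact absurd (e0.trans e1.symm) hσne
    have hkcases : (k : ℕ) = S.card + 2 * (((k : ℕ) - S.card) / 2) ∨
        (k : ℕ) = S.card + 2 * (((k : ℕ) - S.card) / 2) + 1 := by omega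
    rcases hkcases with hc | hc
    · have hk0 : k = pos t ht (S.card + 2 * (((k : ℕ) - S.card) / 2)) := by
        apply Fin.val_injective
        show (k : ℕ) = _
        rw [hp0v]
        exact hc
      rw [hk0]; exact hfinal.1
    · have hk0 : k = pos t ht (S.card + 2 * (((k : ℕ) - S.card) / 2) + 1) := by
        apply Fin.val_injective
        show (k : ℕ) = _
        rw [hp1v]
        exact hc
      rw [hk0]; exact hfinal.2

end KeyConstr

lemma key (d t : ℕ) (ht : 1 ≤ t) (htd : t ≤ d) (S : Finset (Fin d))
    (hst : S.card ≤ t) (hpar : S.card % 2 = t % 2) :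
    ∃ Φ : Equiv.Perm (Fin t) → (Fin t → Fin d),
      Function.Injective Φ ∧ ∀ σ, oddSet d t (Φ σ) = S := by
  have hd : 0 < d := lt_of_lt_of_le ht htd
  obtain ⟨T, hTsub, hTcard⟩ : ∃ T ⊆ Sᶜ, T.card = t - S.card := by
    apply Finset.exists_subset_card_eq
    rw [Finset.card_compl, Fintype.card_fin]
    omega
  exact ⟨KeyConstr.Phi d t S T hd ht hTcard,
    KeyConstr.Phi_inj d t S T hd ht hTcard hst hpar hTsub,
    fun σ => KeyConstr.oddSet_Phi d t S T hd ht hTcard hst hpar hTsub σ⟩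

lemma oddSet_of_inj {d t : ℕ} {y : Fin t → Fin d} (h : Function.Injective y) :
    oddSet d t y = univ.image y := by
  ext i
  rw [mem_oddSet]
  constructor
  · intro hi
    have hne : (univ.filter fun j => y j = i).Nonempty := by
      rw [← Finset.card_pos]
      have : cnt d t y i % 2 = 1 := hi
      simp only [cnt] at this
      omega
    obtain ⟨a, ha⟩ := hne
    rw [mem_filter] at ha
    exact ha.2 ▸ mem_image_of_mem _ (mem_univ a)
  · intro hi
    rw [Finset.mem_image] at hi
    obtain ⟨a, _, rfl⟩ := hi
    have hfa : (univ.filter fun j => y j = y a) = {a} := by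
      ext b
      simp only [mem_filter, mem_univ, true_and, mem_singleton]
      exact ⟨fun hb => h hb, fun hb => by rw [hb]⟩
    simp [cnt, hfa]

lemma inj_of_oddSet_card {d t : ℕ} {y : Fin t → Fin d} (hcard : (oddSet d t y).card = t) :
    Function.Injective y ∧ univ.image y = oddSet d t y := by
  have hsum := sum_cnt d t y
  have hsplit : ∑ i ∈ oddSet d t y, cnt d t y i + ∑ i ∈ (oddSet d t y)ᶜ, cnt d t y i = t := by
    rw [Finset.sum_add_sum_compl]; exact hsum
  have hge : ∀ i ∈ oddSet d t y, 1 ≤ cnt d t y i := fun i hi => by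
    rw [mem_oddSet] at hi; omega
  have h1 : (oddSet d t y).card ≤ ∑ i ∈ oddSet d t y, cnt d t y i := by
    calc (oddSet d t y).card = ∑ _i ∈ oddSet d t y, 1 := by simp
    _ ≤ _ := Finset.sum_le_sum hge
  have hzero : ∀ i ∈ (oddSet d t y)ᶜ, cnt d t y i = 0 := by
    intro i hi
    have hr : ∑ i ∈ (oddSet d t y)ᶜ, cnt d t y i = 0 := by omega
    exact (Finset.sum_eq_zero_iff).mp hr i hi
  have hone : ∀ i ∈ oddSet d t y, cnt d t y i = 1 := by
    intro i hi
    by_contra hne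
    have h2 : ∑ _i ∈ oddSet d t y, 1 < ∑ i ∈ oddSet d t y, cnt d t y i :=
      Finset.sum_lt_sum hge ⟨i, hi, by have := hge i hi; omega⟩
    simp only [Finset.sum_const, smul_eq_mul, mul_one] at h2
    omega
  have hcnt : ∀ i, cnt d t y i ≤ 1 := by
    intro i
    by_cases hi : i ∈ oddSet d t y
    · rw [hone i hi]
    · rw [hzero i (by simpa using hi)]
      omega
  have hinj : Function.Injective y := by
    intro a b hab
    by_contra hne
    have hsub : ({a, b} : Finset (Fin t)) ⊆ univ.filter fun j => y j = y b := by
      intro c hc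
      simp only [mem_insert, mem_singleton] at hc
      rcases hc with rfl | rfl <;> simp [hab]
    have hle := Finset.card_le_card hsub
    rw [Finset.card_pair hne] at hle
    have := hcnt (y b)
    simp only [cnt] at this
    omega
  exact ⟨hinj, (oddSet_of_inj hinj).symm⟩

lemma class_card {d t : ℕ} (x : Fin t → Fin d) (hxt : (oddSet d t x).card = t) :
    (univ.filter fun y => oddSet d t y = oddSet d t x).card = t.factorial := by
  classical
  have key_iff : ∀ y : Fin t → Fin d,
      oddSet d t y = oddSet d t x ↔
        (Function.Injective y ∧ univ.image y = oddSet d t x) := by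
    intro y
    constructor
    · intro h
      have := inj_of_oddSet_card (y := y) (by rw [h]; exact hxt)
      exact ⟨this.1, by rw [this.2, h]⟩
    · rintro ⟨h1, h2⟩
      rw [oddSet_of_inj h1, h2]
  have hfe : (univ.filter fun y => oddSet d t y = oddSet d t x) =
      univ.filter fun y => Function.Injective y ∧ univ.image y = oddSet d t x := by
    ext y
    simp only [mem_filter, mem_univ, true_and]
    exact key_iff y
  rw [hfe, ← Fintype.card_subtype]
  have e : {y : Fin t → Fin d // Function.Injective y ∧ univ.image y = oddSet d t x} ≃
      (Fin t ↪ {i // i ∈ oddSet d t x}) := by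
    refine ⟨fun y => ⟨fun a => ⟨y.1 a, ?_⟩, fun a b hab => y.2.1 (congrArg Subtype.val hab)⟩,
      fun e => ⟨fun a => (e a : Fin d), ⟨fun a b hab => e.injective (Subtype.ext hab), ?_⟩⟩,
      fun y => Subtype.ext rfl, fun e => by ext a : 1; rfl⟩
    · have hm := Finset.mem_image_of_mem y.1 (mem_univ a)
      rwa [y.2.2] at hm
    · apply Finset.eq_of_subset_of_card_le
      · intro i hi
        rw [Finset.mem_image] at hi
        obtain ⟨a, _, rfl⟩ := hi
        exact (e a).2
      · have himg : (univ.image fun a => ((e a : Fin d))).card = t := by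
          rw [Finset.card_image_of_injective _ (fun a b hab => e.injective (Subtype.ext hab)),
            Finset.card_univ, Fintype.card_fin]
        rw [himg, hxt]
  rw [Fintype.card_congr e, Fintype.card_embedding_eq, Fintype.card_coe, hxt,
    Fintype.card_fin, Nat.descFactorial_self]

/-- For `2 ≤ d` and `1 ≤ t ≤ d`: (i) `x ∼ y` iff `x` and `y` have the same odd-element
set, and the possible odd-element sets are exactly the `S ⊆ [d]` with `|S| ≤ t` and
`|S| ≡ t (mod 2)` (so classes are in bijection with such subsets); (ii) the number of
classes is `∑_{k=0}^{⌊t/2⌋} C(d, t−2k)`; (iii) every class has size at least `t!`, with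
equality for the classes with `|S| = t`. -/
theorem even_relation_classes (d t : ℕ) (hd : 2 ≤ d) (ht : 1 ≤ t) (htd : t ≤ d) :
    (∀ x y : Fin t → Fin d, evenRel d t x y ↔ oddSet d t x = oddSet d t y) ∧
    (∀ S : Finset (Fin d),
      (S.card ≤ t ∧ S.card % 2 = t % 2) ↔ ∃ x : Fin t → Fin d, oddSet d t x = S) ∧
    ((Finset.univ.image (oddSet d t)).card =
      ∑ k ∈ Finset.range (t / 2 + 1), d.choose (t - 2 * k)) ∧
    (∀ x : Fin t → Fin d,
      t.factorial ≤ (Finset.univ.filter fun y => evenRel d t x y).card) ∧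
    (∀ x : Fin t → Fin d, (oddSet d t x).card = t →
      (Finset.univ.filter fun y => evenRel d t x y).card = t.factorial) := by
  have part1 : ∀ x y : Fin t → Fin d, evenRel d t x y ↔ oddSet d t x = oddSet d t y :=
    evenRel_iff
  have part2 : ∀ S : Finset (Fin d),
      (S.card ≤ t ∧ S.card % 2 = t % 2) ↔ ∃ x : Fin t → Fin d, oddSet d t x = S := by
    intro S
    constructor
    · rintro ⟨h1, h2⟩
      obtain ⟨Φ, _, hΦ⟩ := key d t ht htd S h1 h2
      exact ⟨Φ 1, hΦ 1⟩
    · rintro ⟨x, rfl⟩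
      exact ⟨oddSet_card_le d t x, oddSet_card_mod d t x⟩
  refine ⟨part1, part2, ?_, ?_, ?_⟩
  · -- number of classes
    have himg : univ.image (oddSet d t) =
        univ.filter (fun S : Finset (Fin d) => S.card ≤ t ∧ S.card % 2 = t % 2) := by
      ext S
      simp only [Finset.mem_image, Finset.mem_filter, Finset.mem_univ, true_and]
      exact (part2 S).symm
    rw [himg]
    rw [Finset.card_eq_sum_card_fiberwise
      (f := fun S : Finset (Fin d) => (t - S.card) / 2) (t := Finset.range (t / 2 + 1))
      (by
        intro S hS
        rw [Finset.mem_coe, Finset.mem_filter] at hS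
        rw [Finset.mem_coe, Finset.mem_range]
        show (t - S.card) / 2 < t / 2 + 1
        omega)]
    apply Finset.sum_congr rfl
    intro k hk
    rw [Finset.mem_range] at hk
    have hfilt : ((univ.filter fun S : Finset (Fin d) =>
        S.card ≤ t ∧ S.card % 2 = t % 2).filter fun S => (t - S.card) / 2 = k) =
        univ.filter (fun S : Finset (Fin d) => S.card = t - 2 * k) := by
      rw [Finset.filter_filter]
      apply Finset.filter_congr
      intro S _
      constructor
      · intro h
        omega
      · intro h
        omega
    rw [hfilt]
    have hpc : (univ : Finset (Finset (Fin d))).filter (fun S => S.card = t - 2 * k) =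
        Finset.powersetCard (t - 2 * k) univ := by
      rw [Finset.powersetCard_eq_filter, Finset.powerset_univ]
    rw [hpc, Finset.card_powersetCard, Finset.card_univ, Fintype.card_fin]
  · -- lower bound t!
    intro x
    obtain ⟨Φ, hΦinj, hΦ⟩ := key d t ht htd (oddSet d t x)
      (oddSet_card_le d t x) (oddSet_card_mod d t x)
    have hmap : ∀ σ ∈ (univ : Finset (Equiv.Perm (Fin t))),
        Φ σ ∈ univ.filter fun y => evenRel d t x y := by
      intro σ _
      rw [Finset.mem_filter]
      refine ⟨Finset.mem_univ _, ?_⟩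
      rw [part1]
      exact (hΦ σ).symm
    calc t.factorial = Fintype.card (Equiv.Perm (Fin t)) := by
          rw [Fintype.card_perm, Fintype.card_fin]
    _ = (univ : Finset (Equiv.Perm (Fin t))).card := Finset.card_univ.symm
    _ ≤ _ := Finset.card_le_card_of_injOn Φ hmap hΦinj.injOn
  · -- classes with |S| = t have size exactly t!
    intro x hxt
    have hfe : (univ.filter fun y => evenRel d t x y) =
        univ.filter fun y => oddSet d t y = oddSet d t x := by
      ext y
      simp only [Finset.mem_filter, Finset.mem_univ, true_and]
      rw [part1 x y]
      exact eq_comm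
    rw [hfe]
    exact class_card x hxt
end
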